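/- arXiv:1710.00876 — 5 statements merged into one kernel-verified Lean document; each statement's English description precedes it below -/
import Mathlib

section
/- Let S consist of 2n points given as n pairs {p_i, q_i} in a metric space (n ≥ 1), let T be a minimum spanning tree of S, and let h be a maximum-weight edge of T. Then there exists a feasible coloring S = R ∪ B with max(btCost(R), btCost(B)) ≤ 9 · w(h), where w(h) is the length of the edge h. -/
/-!
Every edge of `T` has length at most `w = dist h.1 h.2`, so `S` is `w`-chain-connected. By
Sekanina's argument the points of a `w`-chain-connected set can be listed as a path with
consecutive distances at most `3 * w`. Cutting the path into consecutive blocks of two gives a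
second perfect matching of `S` besides the given pairs; the union of two perfect matchings is a
disjoint union of even cycles, so some feasible colouring puts exactly one point of every block
into `R`. Consecutive red points are then at most three steps apart along the path, so in path
order they form a spanning path of `R` with edges at most `9 * w`, and likewise for `B`.
-/

variable {α : Type*} [MetricSpace α] [DecidableEq α]

/-- Two points are connected via the edge set `E` (edges usable in both directions). -/
def EdgeConn (E : Finset (α × α)) (x y : α) : Prop :=
  Relation.ReflTransGen (fun a b => (a, b) ∈ E ∨ (b, a) ∈ E) x y

/-- `E` is (the edge set of) a spanning tree of the complete graph on the finite
point set `X`. -/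
def IsSpanningTreeOn (X : Finset α) (E : Finset (α × α)) : Prop :=
  (∀ e ∈ E, e.1 ∈ X ∧ e.2 ∈ X) ∧ E.card + 1 = X.card ∧
    ∀ x ∈ X, ∀ y ∈ X, EdgeConn E x y

/-- The bottleneck spanning tree cost of `X`: the least `c ≥ 0` such that some
spanning tree on `X` has all edge lengths at most `c`. -/
noncomputable def btCost (X : Finset α) : ℝ :=
  sInf {c | 0 ≤ c ∧ ∃ E : Finset (α × α), IsSpanningTreeOn X E ∧ ∀ e ∈ E, dist e.1 e.2 ≤ c}

section ChainJoined

variable {β : Type*} [PseudoMetricSpace β]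

def ChainJoined (X : Finset β) (w : ℝ) : β → β → Prop :=
  Relation.ReflTransGen fun x y => x ∈ X ∧ y ∈ X ∧ dist x y ≤ w

namespace ChainJoined

variable {X Y : Finset β} {w : ℝ} {x y : β}

theorem symm (h : ChainJoined X w x y) : ChainJoined X w y x :=
  Relation.ReflTransGen.mono (fun _ _ h => ⟨h.2.1, h.1, (dist_comm _ _).trans_le h.2.2⟩) _ _
    h.swap

protected theorem trans {z : β} (hxy : ChainJoined X w x y) (hyz : ChainJoined X w y z) :
    ChainJoined X w x z :=
  Relation.ReflTransGen.trans hxy hyz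

theorem restrict (h : ChainJoined X w x y) (hY : ∀ z ∈ X, ChainJoined X w x z → z ∈ Y) :
    ChainJoined Y w x y := by
  induction h with
  | refl => exact .refl
  | @tail u v hxu huv ih => exact ih.tail ⟨hY u huv.1 hxu, hY v huv.2.1 (hxu.tail huv), huv.2.2⟩

theorem exists_last_step [DecidableEq β] (h : ChainJoined X w x y) (hxy : x ≠ y) :
    ∃ u ∈ X.erase y, ChainJoined (X.erase y) w x u ∧ dist u y ≤ w := by
  induction h using Relation.ReflTransGen.head_induction_on with
  | refl => exact absurd rfl hxy
  | @head x v hxv _ ih =>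
    by_cases hvy : v = y
    · subst hvy
      exact ⟨x, Finset.mem_erase.2 ⟨hxy, hxv.1⟩, .refl, hxv.2.2⟩
    · obtain ⟨u, hu, hvu, huy⟩ := ih hvy
      exact ⟨u, hu, hvu.head ⟨Finset.mem_erase.2 ⟨hxy, hxv.1⟩,
        Finset.mem_erase.2 ⟨hvy, hxv.2.1⟩, hxv.2.2⟩, huy⟩

end ChainJoined

theorem IsSpanningTreeOn.chainJoined {X : Finset β} {T : Finset (β × β)} {w : ℝ}
    (hT : IsSpanningTreeOn X T) (hw : ∀ e ∈ T, dist e.1 e.2 ≤ w) :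
    ∀ x ∈ X, ∀ y ∈ X, ChainJoined X w x y := fun x hx y hy =>
  Relation.ReflTransGen.mono (fun u v huv => huv.elim
    (fun he => ⟨(hT.1 _ he).1, (hT.1 _ he).2, hw _ he⟩)
    (fun he => ⟨(hT.1 _ he).2, (hT.1 _ he).1, dist_comm u v ▸ hw _ he⟩)) _ _
    (hT.2.2 x hx y hy)

variable [DecidableEq β] {w : ℝ}

theorem chainJoined_sdiff {X C : Finset β} {a : β} (ha : a ∈ X)
    (hX : ∀ x ∈ X, ChainJoined X w a x)
    (hC : ∀ c ∈ C, ∀ z ∈ X.erase a, ChainJoined (X.erase a) w c z → z ∈ C)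
    (haC : a ∉ C) :
    ∀ x ∈ X \ C, ChainJoined (X \ C) w a x := by
  intro x hx
  obtain ⟨hxX, hxC⟩ := Finset.mem_sdiff.1 hx
  by_cases hxa : x = a
  · exact hxa ▸ .refl
  obtain ⟨v, hvY, hxv, hva⟩ := (hX x hxX).symm.exists_last_step hxa
  have hstay : ∀ z ∈ X.erase a, ChainJoined (X.erase a) w x z → z ∈ X \ C := fun z hz hxz =>
    Finset.mem_sdiff.2 ⟨Finset.mem_of_mem_erase hz,
      fun hzC => hxC (hC z hzC x (Finset.mem_erase.2 ⟨hxa, hxX⟩) hxz.symm)⟩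
  exact ChainJoined.symm <| (hxv.restrict hstay).tail
    ⟨hstay v hvY hxv, Finset.mem_sdiff.2 ⟨ha, haC⟩, hva⟩

/-- Sekanina's argument: split off the chain component `C` of some `y ≠ a` in `X \ {a}`. List
`X \ C` from `a`, then list `C` from a point `u` that is `w`-close to `a` and append it
reversed, so that the whole list ends at `u`. -/
theorem exists_chain_of_chainJoined (hw : 0 ≤ w) (X : Finset β) :
    ∀ a ∈ X, (∀ x ∈ X, ChainJoined X w a x) →
      ∃ l : List β, l.Nodup ∧ l.toFinset = X ∧ l.head? = some a ∧
        (∀ e ∈ l.getLast?, dist e a ≤ w) ∧ l.IsChain (fun x y => dist x y ≤ 3 * w) := by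
  classical
  induction X using Finset.strongInduction with
  | H X IH =>
  intro a ha hX
  by_cases hsingle : ∀ y ∈ X, y = a
  · refine ⟨[a], List.nodup_singleton a, ?_, rfl, by simpa using hw, List.isChain_singleton a⟩
    simpa using (Finset.eq_singleton_iff_unique_mem.2 ⟨ha, hsingle⟩).symm
  push Not at hsingle
  obtain ⟨y, hyX, hya⟩ := hsingle
  set Y := X.erase a
  set C := Y.filter (ChainJoined Y w y)
  obtain ⟨u, huY, hyu, hua⟩ := (hX y hyX).symm.exists_last_step hya
  have hCX : C ⊂ X := (Finset.filter_subset _ _).trans_ssubset (Finset.erase_ssubset ha)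
  have hC : ∀ x ∈ C, ChainJoined C w u x := fun x hx =>
    (hyu.symm.trans (Finset.mem_filter.1 hx).2).restrict fun z hz hz' =>
      Finset.mem_filter.2 ⟨hz, hyu.trans hz'⟩
  obtain ⟨lC, hlC_nodup, hlC, hlC_head, hlC_last, hlC_chain⟩ :=
    IH C hCX u (Finset.mem_filter.2 ⟨huY, hyu⟩) hC
  have haC : a ∉ C := fun h => Finset.notMem_erase a X (Finset.mem_filter.1 h).1
  have hX'X : X \ C ⊂ X :=
    Finset.sdiff_ssubset hCX.subset
      ⟨y, Finset.mem_filter.2 ⟨Finset.mem_erase.2 ⟨hya, hyX⟩, .refl⟩⟩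
  have hX' := chainJoined_sdiff ha hX (fun c hc z hz hcz =>
    Finset.mem_filter.2 ⟨hz, (Finset.mem_filter.1 hc).2.trans hcz⟩) haC
  obtain ⟨l', hl'_nodup, hl', hl'_head, hl'_last, hl'_chain⟩ :=
    IH (X \ C) hX'X a (Finset.mem_sdiff.2 ⟨ha, haC⟩) hX'
  refine ⟨l' ++ lC.reverse, ?_, ?_, ?_, ?_, ?_⟩
  · refine List.nodup_append.2
      ⟨hl'_nodup, List.nodup_reverse.2 hlC_nodup, fun x hx z hz hxz => ?_⟩
    have hxX' : x ∈ X \ C := hl' ▸ List.mem_toFinset.2 hx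
    have hzC : z ∈ C := hlC ▸ List.mem_toFinset.2 (List.mem_reverse.1 hz)
    exact (Finset.mem_sdiff.1 hxX').2 (hxz ▸ hzC)
  · simp [hl', hlC, Finset.sdiff_union_of_subset hCX.subset]
  · simp [List.head?_append, hl'_head]
  · simpa [List.getLast?_append, hlC_head] using hua
  · refine hl'_chain.append (List.isChain_reverse.2 (hlC_chain.imp fun x y h => ?_)) ?_
    · rwa [dist_comm]
    intro x hx z hz
    rw [List.head?_reverse] at hz
    have hxa := hl'_last x hx
    have hzu := hlC_last z hz
    calc dist x z ≤ dist x a + dist a u + dist u z := dist_triangle4 x a u z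
      _ ≤ 3 * w := by rw [dist_comm a u, dist_comm u z]; linarith

theorem exists_nodup_isChain_of_chainJoined (hw : 0 ≤ w) {X : Finset β}
    (hX : ∀ x ∈ X, ∀ y ∈ X, ChainJoined X w x y) :
    ∃ l : List β, l.Nodup ∧ l.toFinset = X ∧ l.IsChain (fun x y => dist x y ≤ 3 * w) := by
  rcases X.eq_empty_or_nonempty with rfl | ⟨a, ha⟩
  · exact ⟨[], List.nodup_nil, rfl, List.IsChain.nil⟩
  · obtain ⟨l, hnd, hl, -, -, hch⟩ := exists_chain_of_chainJoined hw X a ha (hX a ha)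
    exact ⟨l, hnd, hl, hch⟩

end ChainJoined

theorem EdgeConn.symm {β : Type*} {E : Finset (β × β)} {x y : β} (h : EdgeConn E x y) :
    EdgeConn E y x :=
  Relation.ReflTransGen.mono (fun _ _ h => h.symm) _ _ h.swap

section SpanningPath

variable {β : Type*} [DecidableEq β]

theorem isSpanningTreeOn_zip_tail : ∀ {l : List β}, l.Nodup → l ≠ [] →
    IsSpanningTreeOn l.toFinset (l.zip l.tail).toFinset
  | [x], _, _ => by
    refine ⟨by simp, by simp, fun y hy z hz => ?_⟩
    simp only [List.toFinset_cons, List.toFinset_nil, Finset.mem_insert,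
      Finset.notMem_empty, or_false] at hy hz
    subst hy hz
    exact .refl
  | x :: y :: l, hnd, _ => by
    obtain ⟨hedges, hcard, hconn⟩ :=
      isSpanningTreeOn_zip_tail (l := y :: l) (List.nodup_cons.1 hnd).2 (List.cons_ne_nil y l)
    set E := ((x :: y :: l).zip (y :: l)).toFinset
    have hx : x ∉ (y :: l).toFinset := by simpa using (List.nodup_cons.1 hnd).1
    have hxy : (x, y) ∉ ((y :: l).zip l).toFinset := fun h => hx (hedges _ h).1
    have hmono : ∀ {u v}, EdgeConn ((y :: l).zip l).toFinset u v → EdgeConn E u v := fun h =>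
      Relation.ReflTransGen.mono (fun u v h => by
        simp only [E, List.zip_cons_cons, List.toFinset_cons, Finset.mem_insert] at h ⊢
        tauto) _ _ h
    have hfrom_x : ∀ v ∈ (x :: y :: l).toFinset, EdgeConn E x v := by
      intro v hv
      rcases List.mem_cons.1 (List.mem_toFinset.1 hv) with rfl | hv
      · exact .refl
      · exact .head (Or.inl (by simp [E])) (hmono (hconn y (by simp) v (List.mem_toFinset.2 hv)))
    refine ⟨fun e he => ?_, ?_, fun u hu v hv => (hfrom_x u hu).symm.trans (hfrom_x v hv)⟩
    · simp only [List.tail_cons, List.zip_cons_cons, List.toFinset_cons, Finset.mem_insert] at he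
      rw [List.toFinset_cons]
      rcases he with rfl | he
      · simp
      · exact (hedges e he).imp Finset.mem_insert_of_mem Finset.mem_insert_of_mem
    · rw [List.tail_cons, List.zip_cons_cons, List.toFinset_cons, List.toFinset_cons (a := x),
        Finset.card_insert_of_notMem hxy, Finset.card_insert_of_notMem hx, ← hcard]
      rfl

end SpanningPath

theorem List.IsChain.rel_of_mem_zip_tail {β : Type*} {R : β → β → Prop} :
    ∀ {l : List β}, l.IsChain R → ∀ e ∈ l.zip l.tail, R e.1 e.2
  | [], _, _, he | [_], _, _, he => by simp at he
  | x :: y :: l, h, e, he => by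
    rw [List.tail_cons, List.zip_cons_cons, List.mem_cons] at he
    rcases he with rfl | he
    · exact (List.isChain_cons_cons.1 h).1
    · exact (List.isChain_cons_cons.1 h).2.rel_of_mem_zip_tail e he

theorem btCost_le_of_isChain {β : Type*} [MetricSpace β] [DecidableEq β] {l : List β} {c : ℝ}
    (hnd : l.Nodup) (hc : 0 ≤ c) (hl : l.IsChain fun x y => dist x y ≤ c) :
    btCost l.toFinset ≤ c := by
  rcases eq_or_ne l [] with rfl | hne
  · -- there is no spanning tree on `∅`, so `btCost ∅ = sInf ∅ = 0`
    have hempty : {c | 0 ≤ c ∧ ∃ E : Finset (β × β),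
        IsSpanningTreeOn ([] : List β).toFinset E ∧ ∀ e ∈ E, dist e.1 e.2 ≤ c} = ∅ := by
      simp [IsSpanningTreeOn]
    rw [btCost, hempty, Real.sInf_empty]
    exact hc
  · exact csInf_le ⟨0, fun _ h => h.1⟩ ⟨hc, _, isSpanningTreeOn_zip_tail hnd hne,
      fun e he => hl.rel_of_mem_zip_tail e (List.mem_toFinset.1 he)⟩

theorem isChain_filter_of_alternating {β : Type*} [PseudoMetricSpace β] {s : ℝ} (hs : 0 ≤ s)
    (q : β → Bool) : ∀ {l : List β}, l.IsChain (fun x y => dist x y ≤ s) →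
      (∀ k x y, l[2 * k]? = some x → l[2 * k + 1]? = some y → q x ≠ q y) →
      (l.filter q).IsChain (fun x y => dist x y ≤ 3 * s) ∧
        ∀ x ∈ l.head?, ∀ z ∈ (l.filter q).head?, dist x z ≤ s
  | [], _, _ => by simp
  | [x], _, _ => by
    simp only [List.filter_cons, List.filter_nil]
    split <;> simp [hs]
  | x :: y :: l, hl, halt => by
    obtain ⟨hxy, hyl⟩ := List.isChain_cons_cons.1 hl
    have hy_head : ∀ z ∈ l.head?, dist y z ≤ s := (List.isChain_cons.1 hyl).1
    obtain ⟨ih_chain, ih_head⟩ :=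
      isChain_filter_of_alternating hs q hyl.tail fun k x' y' hx hy => halt (k + 1) x' y'
        (by rw [show 2 * (k + 1) = 2 * k + 1 + 1 by ring]; simpa using hx)
        (by rw [show 2 * (k + 1) + 1 = 2 * k + 1 + 1 + 1 by ring]; simpa using hy)
    have hyz : ∀ z ∈ (l.filter q).head?, dist y z ≤ 2 * s := by
      intro z hz
      obtain ⟨l₀, hl₀⟩ : ∃ l₀, l.head? = some l₀ := by cases l <;> simp_all
      linarith [dist_triangle y l₀ z, hy_head l₀ hl₀, ih_head l₀ hl₀ z hz]
    have hqxy : q x ≠ q y := halt 0 x y rfl rfl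
    cases hqx : q x
    · have hqy : q y = true := by simpa [hqx] using hqxy.symm
      simp only [List.filter_cons, hqx, hqy, Bool.false_eq_true, ↓reduceIte, List.isChain_cons,
        List.head?_cons, Option.mem_def, Option.some.injEq, forall_eq']
      exact ⟨⟨fun z hz => by linarith [hyz z hz], ih_chain⟩, by simpa using hxy⟩
    · have hqy : q y = false := by simpa [hqx] using hqxy.symm
      simp only [List.filter_cons, hqx, hqy, Bool.false_eq_true, ↓reduceIte, List.isChain_cons,
        List.head?_cons, Option.mem_def, Option.some.injEq, forall_eq']
      refine ⟨⟨fun z hz => ?_, ih_chain⟩, by simpa using hs⟩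
      linarith [dist_triangle x y z, hyz z hz]

section Involutions

variable {β : Type*} {μ π : Equiv.Perm β}

theorem apply_zpow_mul_apply_of_involutive (hμ : Function.Involutive μ)
    (hπ : Function.Involutive π) (t : ℤ) (x : β) :
    π (((μ * π) ^ t) x) = ((μ * π) ^ (-t)) (π x) := by
  have hinv : ∀ {σ : Equiv.Perm β}, Function.Involutive σ → ∀ y, σ⁻¹ y = σ y :=
    fun hσ y => by rw [Equiv.Perm.inv_eq_iff_eq, hσ]
  have hsc : SemiconjBy π (μ * π) (μ * π)⁻¹ := by
    ext y
    simp [Equiv.Perm.mul_apply, hinv hμ, hinv hπ]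
  rw [zpow_neg, ← inv_zpow]
  exact congrArg (· x) (hsc.zpow_right t).eq

theorem not_sameCycle_apply_of_involutive (hμ : Function.Involutive μ)
    (hπ : Function.Involutive π) (hμ₀ : ∀ x, μ x ≠ x) (hπ₀ : ∀ x, π x ≠ x)
    (x : β) : ¬ (μ * π).SameCycle x (π x) := by
  rintro ⟨i, hi⟩
  have hreflect : ∀ t : ℤ, π (((μ * π) ^ t) x) = ((μ * π) ^ (i - t)) x := fun t => by
    rw [apply_zpow_mul_apply_of_involutive hμ hπ, ← hi, ← Equiv.Perm.mul_apply, ← zpow_add,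
      neg_add_eq_sub]
  -- `π` reverses the cycle through `x` and `π x`, so `π` or `μ` fixes its midpoint
  rcases Int.even_or_odd' i with ⟨t, rfl | rfl⟩
  · exact hπ₀ _ (by simpa [two_mul] using hreflect t)
  · apply hμ₀ (((μ * π) ^ (t + 1)) x)
    calc μ (((μ * π) ^ (t + 1)) x) = (μ * π) (π (((μ * π) ^ (t + 1)) x)) := by
          simp [Equiv.Perm.mul_apply, hπ _]
      _ = ((μ * π) ^ (t + 1)) x := by
          rw [hreflect, ← Equiv.Perm.mul_apply, ← zpow_one_add]
          congr 2
          ring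

/-- Every orbit of `⟨μ, π⟩` is the union of the `μ * π`-cycles of some `r` and of `π r`,
which are disjoint by `not_sameCycle_apply_of_involutive`; colour a point by whether it lies on
the cycle of a chosen representative of its orbit. -/
theorem exists_coloring_of_involutive (hμ : Function.Involutive μ) (hπ : Function.Involutive π)
    (hμ₀ : ∀ x, μ x ≠ x) (hπ₀ : ∀ x, π x ≠ x) :
    ∃ χ : β → Bool, (∀ x, χ (μ x) = !χ x) ∧ ∀ x, χ (π x) = !χ x := by
  classical
  set g := μ * π
  let rep : β → β := fun x =>
    @Classical.epsilon β ⟨x⟩ fun r => g.SameCycle x r ∨ g.SameCycle (π x) r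
  have hrep_mem : ∀ x, g.SameCycle x (rep x) ∨ g.SameCycle (π x) (rep x) := fun x =>
    @Classical.epsilon_spec β (fun r => g.SameCycle x r ∨ g.SameCycle (π x) r)
      ⟨x, .inl (.refl g x)⟩
  have hrep_π : ∀ x, rep (π x) = rep x := fun x => by
    simp only [rep, hπ x, or_comm]
  have hrep_g : ∀ x, rep (g x) = rep x := fun x => by
    have hπg : π (g x) = g⁻¹ (π x) := by
      rw [← zpow_one g, apply_zpow_mul_apply_of_involutive hμ hπ, zpow_neg, zpow_one]
    simp only [rep, hπg, Equiv.Perm.inv_def, Equiv.Perm.sameCycle_apply_left,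
      Equiv.Perm.sameCycle_symm_apply_left]
  let χ : β → Bool := fun x => decide (g.SameCycle (rep x) x)
  have hχ_π : ∀ x, χ (π x) = !χ x := fun x => by
    have hdisj := not_sameCycle_apply_of_involutive hμ hπ hμ₀ hπ₀ x
    simp only [χ, hrep_π]
    rcases hrep_mem x with h | h
    · simpa [h.symm] using fun h' => hdisj (h.trans h')
    · simpa [h.symm] using fun h' => hdisj (h'.symm.trans h.symm)
  refine ⟨χ, fun x => ?_, hχ_π⟩
  have hμx : μ x = g (π x) := by simp [g, Equiv.Perm.mul_apply, hπ x]
  rw [hμx, ← hχ_π]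
  simp only [χ, hrep_g, Equiv.Perm.sameCycle_apply_right]

theorem exists_coloring_of_prod_bool_equiv {ι κ : Type*} (ψ : κ × Bool ≃ ι × Bool) :
    ∃ σ : ι → Bool, ∀ k, (ψ (k, true)).2 = σ (ψ (k, true)).1 ↔
      (ψ (k, false)).2 ≠ σ (ψ (k, false)).1 := by
  have hμ : Function.Involutive (Prod.map (@id ι) not) :=
    .prodMap (fun _ => rfl) Bool.involutive_not
  have hν : Function.Involutive (Prod.map (@id κ) not) :=
    .prodMap (fun _ => rfl) Bool.involutive_not
  obtain ⟨χ, hχμ, hχπ⟩ := exists_coloring_of_involutive (μ := hμ.toPerm _)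
    (π := ψ.permCongr (hν.toPerm _)) hμ (fun p => by simp [Equiv.permCongr_apply, hν _])
    (fun p => by simp [Prod.ext_iff])
    (fun p h => by simp [Equiv.permCongr_apply, ← ψ.eq_symm_apply, Prod.ext_iff] at h)
  have hgraph : ∀ p : ι × Bool, p.2 = χ (p.1, true) ↔ χ p = true := fun ⟨i, b⟩ => by
    cases b
    · simpa using (hχμ (i, true)).symm
    · simp
  refine ⟨fun i => χ (i, true), fun k => ?_⟩
  have hk : χ (ψ (k, true)) = !χ (ψ (k, false)) := by
    simpa [Equiv.permCongr_apply] using hχπ (ψ (k, false))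
  simp only [hgraph, hk, ne_eq, Bool.not_eq_true', Bool.not_eq_true]

end Involutions

section FeasibleColoring

variable {β : Type*} [DecidableEq β] {n : ℕ} {pts : Fin n × Bool → β}

theorem length_eq_of_toFinset_eq_image (hinj : Function.Injective pts) {l : List β}
    (hnd : l.Nodup) (hl : l.toFinset = Finset.image pts Finset.univ) : l.length = 2 * n := by
  rw [← List.toFinset_card_of_nodup hnd, hl, Finset.card_image_of_injective _ hinj]
  simp [mul_comm]

theorem exists_equiv_getElem?_two_mul_add (hinj : Function.Injective pts) {l : List β}
    (hnd : l.Nodup)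
    (hl : l.toFinset = Finset.image pts Finset.univ) :
    ∃ ψ : Fin n × Bool ≃ Fin n × Bool,
      ∀ (k : Fin n) b, l[2 * (k : ℕ) + b.toNat]? = some (pts (ψ (k, b))) := by
  have hmem : ∀ x, x ∈ l ↔ x ∈ Set.range pts := fun x => by
    rw [← List.mem_toFinset, hl]
    simp
  let ψ := ((((Equiv.prodCongr (.refl _) finTwoEquiv.symm).trans finProdFinEquiv).trans
    (finCongr (by rw [length_eq_of_toFinset_eq_image hinj hnd hl, mul_comm]))).trans
    (hnd.getEquiv l)).trans ((Equiv.subtypeEquivRight hmem).trans (Equiv.ofInjective pts hinj).symm)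
  refine ⟨ψ, fun k b => ?_⟩
  have hidx : (finTwoEquiv.symm b : ℕ) + 2 * k = 2 * k + b.toNat := by
    cases b <;> simp [finTwoEquiv, add_comm]
  simp [ψ, Equiv.apply_ofInjective_symm, hidx]

theorem btCost_image_le_of_alternating [MetricSpace β] (hinj : Function.Injective pts)
    {l : List β} (hnd : l.Nodup) (hl : l.toFinset = Finset.image pts Finset.univ) {s : ℝ}
    (hs : 0 ≤ s) (hch : l.IsChain fun x y => dist x y ≤ s)
    {ψ : Fin n × Bool ≃ Fin n × Bool}
    (hψ : ∀ (k : Fin n) b, l[2 * (k : ℕ) + b.toNat]? = some (pts (ψ (k, b))))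
    (σ : Fin n → Bool)
    (hσ : ∀ k, (ψ (k, true)).2 = σ (ψ (k, true)).1 ↔
      (ψ (k, false)).2 ≠ σ (ψ (k, false)).1) :
    btCost (Finset.image (fun i => pts (i, σ i)) Finset.univ) ≤ 3 * s := by
  set R := Finset.image (fun i => pts (i, σ i)) Finset.univ
  have hR : ∀ p, pts p ∈ R ↔ p.2 = σ p.1 := fun p => by
    simp only [R, Finset.mem_image, Finset.mem_univ, true_and, hinj.eq_iff, Prod.ext_iff]
    exact ⟨fun ⟨i, hi, hb⟩ => hi ▸ hb.symm, fun h => ⟨p.1, rfl, h.symm⟩⟩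
  have hRl : R = (l.filter (· ∈ R)).toFinset := by
    ext x
    simp only [List.toFinset_filter, hl, Finset.mem_filter, decide_eq_true_eq, iff_and_self]
    intro hx
    obtain ⟨i, -, rfl⟩ := Finset.mem_image.1 hx
    exact Finset.mem_image_of_mem _ (Finset.mem_univ _)
  have halt : ∀ k x y, l[2 * k]? = some x → l[2 * k + 1]? = some y →
      decide (x ∈ R) ≠ decide (y ∈ R) := by
    intro k x y hx hy
    have hk : k < n := by
      have := (List.getElem?_eq_some_iff.1 hy).1
      rw [length_eq_of_toFinset_eq_image hinj hnd hl] at this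
      omega
    obtain rfl := Option.some.inj (hx.symm.trans (hψ ⟨k, hk⟩ false))
    obtain rfl := Option.some.inj (hy.symm.trans (hψ ⟨k, hk⟩ true))
    simpa [hR] using not_iff.2 (hσ ⟨k, hk⟩).symm
  rw [hRl]
  exact btCost_le_of_isChain (hnd.filter _) (by positivity)
    (isChain_filter_of_alternating hs _ hch halt).1

end FeasibleColoring

theorem bottleneck_nine_approx_coloring_general
    (n : ℕ)
    (pts : Fin n × Bool → α) (hinj : Function.Injective pts)
    (S : Finset α) (hS : S = Finset.image pts Finset.univ)
    (T : Finset (α × α)) (hT : IsSpanningTreeOn S T)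
    (h : α × α) (hmax : ∀ e ∈ T, dist e.1 e.2 ≤ dist h.1 h.2) :
    ∃ σ : Fin n → Bool,
      max (btCost (Finset.image (fun i => pts (i, σ i)) Finset.univ))
          (btCost (Finset.image (fun i => pts (i, !(σ i))) Finset.univ)) ≤
        9 * dist h.1 h.2 := by
  subst hS
  obtain ⟨l, hnd, hl, hch⟩ :=
    exists_nodup_isChain_of_chainJoined dist_nonneg (hT.chainJoined hmax)
  obtain ⟨ψ, hψ⟩ := exists_equiv_getElem?_two_mul_add hinj hnd hl
  obtain ⟨σ, hσ⟩ := exists_coloring_of_prod_bool_equiv ψ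
  have hbound := btCost_image_le_of_alternating hinj hnd hl (by positivity) hch hψ
  refine ⟨σ, max_le ?_ ?_⟩ <;> rw [show 9 * dist h.1 h.2 = 3 * (3 * dist h.1 h.2) by ring]
  · exact hbound σ hσ
  · exact hbound (fun i => !σ i) fun k => by simpa [Bool.eq_not] using (hσ k).not

/-- `S` consists of `n ≥ 1` pairs `{pts (i, false), pts (i, true)}`. Let `T`
be a minimum spanning tree of `S` (minimizing total edge length) and `h` a maximum-weight
edge of `T`. Then there exists a feasible coloring `S = R ∪ B` with
`max (btCost R) (btCost B) ≤ 9 · dist h.1 h.2`. -/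
theorem bottleneck_nine_approx_coloring
    (n : ℕ) (hn : 1 ≤ n)
    (pts : Fin n × Bool → α) (hinj : Function.Injective pts)
    (S : Finset α) (hS : S = Finset.image pts Finset.univ)
    (T : Finset (α × α)) (hT : IsSpanningTreeOn S T)
    (hTmin : ∀ E : Finset (α × α), IsSpanningTreeOn S E →
      (∑ e ∈ T, dist e.1 e.2) ≤ ∑ e ∈ E, dist e.1 e.2)
    (h : α × α) (hh : h ∈ T) (hmax : ∀ e ∈ T, dist e.1 e.2 ≤ dist h.1 h.2) :
    ∃ σ : Fin n → Bool,
      max (btCost (Finset.image (fun i => pts (i, σ i)) Finset.univ))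
          (btCost (Finset.image (fun i => pts (i, !(σ i))) Finset.univ)) ≤
        9 * dist h.1 h.2 :=
  bottleneck_nine_approx_coloring_general n pts hinj S hS T hT h hmax
end

section
/- Let S be a finite set of points of even cardinality in a metric space, and let R ⊆ S be a subset of even cardinality, with B = S \ R. Then matchCost(B) ≤ matchCost(S) + matchCost(R), where matchCost(X) denotes the minimum total edge length of a perfect matching on X. -/
set_option linter.unusedSectionVars false
open scoped symmDiff


variable {α : Type*} [MetricSpace α] [DecidableEq α]

/-- `M` is a perfect matching on the finite point set `X`: a set of edges on `X`
with distinct endpoints such that every point of `X` lies on exactly one edge. -/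
def IsPerfectMatchingOn (X : Finset α) (M : Finset (α × α)) : Prop :=
  (∀ e ∈ M, e.1 ∈ X ∧ e.2 ∈ X ∧ e.1 ≠ e.2) ∧
    ∀ x ∈ X, ∃! e, e ∈ M ∧ (x = e.1 ∨ x = e.2)

/-- The minimum total edge length of a perfect matching on `X`. -/
noncomputable def matchCost (X : Finset α) : ℝ :=
  sInf {c | ∃ M : Finset (α × α), IsPerfectMatchingOn X M ∧ c = ∑ e ∈ M, dist e.1 e.2}

/-- An abstract matching: edges with distinct endpoints, pairwise vertex-disjoint. -/
def IsM (M : Finset (α × α)) : Prop :=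
  (∀ e ∈ M, e.1 ≠ e.2) ∧
    ∀ e ∈ M, ∀ f ∈ M, e ≠ f → e.1 ≠ f.1 ∧ e.1 ≠ f.2 ∧ e.2 ≠ f.1 ∧ e.2 ≠ f.2

/-- Vertex set of a matching. -/
def verts (M : Finset (α × α)) : Finset α := M.biUnion fun e => {e.1, e.2}

lemma mem_verts {M : Finset (α × α)} {x : α} :
    x ∈ verts M ↔ ∃ e ∈ M, x = e.1 ∨ x = e.2 := by
  simp [verts]

lemma IsM.subset {M M' : Finset (α × α)} (h : M' ⊆ M) (hM : IsM M) : IsM M' :=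
  ⟨fun e he => hM.1 e (h he), fun e he f hf hef => hM.2 e (h he) f (h hf) hef⟩

lemma perfect_iff {X : Finset α} {M : Finset (α × α)} :
    IsPerfectMatchingOn X M ↔ IsM M ∧ verts M = X := by
  constructor
  · rintro ⟨h1, h2⟩
    have hdisj : ∀ e ∈ M, ∀ f ∈ M, e ≠ f →
        e.1 ≠ f.1 ∧ e.1 ≠ f.2 ∧ e.2 ≠ f.1 ∧ e.2 ≠ f.2 := by
      intro e he f hf hef
      have key : ∀ x : α, x ∈ X → (x = e.1 ∨ x = e.2) → (x = f.1 ∨ x = f.2) → False := by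
        intro x hx hxe hxf
        obtain ⟨g, _, hg⟩ := h2 x hx
        exact hef ((hg e ⟨he, hxe⟩).trans (hg f ⟨hf, hxf⟩).symm)
      refine ⟨fun hq => ?_, fun hq => ?_, fun hq => ?_, fun hq => ?_⟩
      · exact key e.1 (h1 e he).1 (Or.inl rfl) (Or.inl hq)
      · exact key e.1 (h1 e he).1 (Or.inl rfl) (Or.inr hq)
      · exact key e.2 (h1 e he).2.1 (Or.inr rfl) (Or.inl hq)
      · exact key e.2 (h1 e he).2.1 (Or.inr rfl) (Or.inr hq)
    refine ⟨⟨fun e he => (h1 e he).2.2, hdisj⟩, ?_⟩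
    ext x
    rw [mem_verts]
    constructor
    · rintro ⟨e, he, hx | hx⟩
      · exact hx ▸ (h1 e he).1
      · exact hx ▸ (h1 e he).2.1
    · intro hx
      obtain ⟨e, ⟨he, hxe⟩, _⟩ := h2 x hx
      exact ⟨e, he, hxe⟩
  · rintro ⟨⟨hne, hdisj⟩, hV⟩
    constructor
    · intro e he
      refine ⟨?_, ?_, hne e he⟩
      · rw [← hV, mem_verts]; exact ⟨e, he, Or.inl rfl⟩
      · rw [← hV, mem_verts]; exact ⟨e, he, Or.inr rfl⟩
    · intro x hx
      rw [← hV, mem_verts] at hx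
      obtain ⟨e, he, hxe⟩ := hx
      refine ⟨e, ⟨he, hxe⟩, ?_⟩
      rintro f ⟨hf, hxf⟩
      by_contra hef
      obtain ⟨a1, a2, a3, a4⟩ := hdisj f hf e he hef
      rcases hxf with h' | h' <;> rcases hxe with h'' | h'' <;>
        simp_all

lemma verts_insert (e : α × α) (M : Finset (α × α)) :
    verts (insert e M) = {e.1, e.2} ∪ verts M := by
  simp [verts, Finset.biUnion_insert]

lemma verts_erase {M : Finset (α × α)} (hM : IsM M) {e : α × α} (he : e ∈ M) :
    verts (M.erase e) = verts M \ {e.1, e.2} := by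
  ext x
  simp only [mem_verts, Finset.mem_sdiff, Finset.mem_erase, Finset.mem_insert,
    Finset.mem_singleton]
  constructor
  · rintro ⟨f, ⟨hfe, hf⟩, hx⟩
    obtain ⟨a1, a2, a3, a4⟩ := hM.2 f hf e he hfe
    refine ⟨⟨f, hf, hx⟩, ?_⟩
    rcases hx with h | h <;> subst h <;> tauto
  · rintro ⟨⟨f, hf, hx⟩, hne⟩
    refine ⟨f, ⟨?_, hf⟩, hx⟩
    rintro rfl
    rcases hx with h | h <;> subst h <;> tauto

lemma IsM.insert {M : Finset (α × α)} (hM : IsM M) {e : α × α} (hne : e.1 ≠ e.2)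
    (h1 : e.1 ∉ verts M) (h2 : e.2 ∉ verts M) : IsM (insert e M) := by
  constructor
  · intro f hf
    rcases Finset.mem_insert.1 hf with rfl | hf
    · exact hne
    · exact hM.1 f hf
  · intro f hf g hg hfg
    have aux : ∀ f ∈ M, e.1 ≠ f.1 ∧ e.1 ≠ f.2 ∧ e.2 ≠ f.1 ∧ e.2 ≠ f.2 := by
      intro f hf
      refine ⟨?_, ?_, ?_, ?_⟩ <;> rintro h <;>
        [exact h1 (mem_verts.2 ⟨f, hf, Or.inl h⟩);
         exact h1 (mem_verts.2 ⟨f, hf, Or.inr h⟩);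
         exact h2 (mem_verts.2 ⟨f, hf, Or.inl h⟩);
         exact h2 (mem_verts.2 ⟨f, hf, Or.inr h⟩)]
    rcases Finset.mem_insert.1 hf with hfe | hf
    · rcases Finset.mem_insert.1 hg with hge | hg
      · exact absurd (hfe.trans hge.symm) hfg
      · rw [hfe]; exact aux g hg
    · rcases Finset.mem_insert.1 hg with hge | hg
      · rw [hge]
        obtain ⟨a1, a2, a3, a4⟩ := aux f hf
        exact ⟨a1.symm, a3.symm, a2.symm, a4.symm⟩
      · exact hM.2 f hf g hg hfg

/-- The other endpoint of an edge. -/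
def other (e : α × α) (x : α) : α := if x = e.1 then e.2 else e.1

lemma other_spec {e : α × α} {x : α} (hx : x = e.1 ∨ x = e.2) (hne : e.1 ≠ e.2) :
    other e x ≠ x ∧ ({e.1, e.2} : Finset α) = {x, other e x} ∧
      dist e.1 e.2 = dist x (other e x) ∧ (other e x = e.1 ∨ other e x = e.2) := by
  unfold other
  rcases hx with rfl | rfl
  · simp only [if_pos rfl]
    exact ⟨hne.symm, rfl, rfl, Or.inr rfl⟩
  · rw [if_neg (fun h => hne h.symm)]
    exact ⟨hne, Finset.pair_comm _ _, dist_comm _ _, Or.inl rfl⟩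

lemma exists_matching : ∀ n (X : Finset α), X.card = n → Even n →
    ∃ M : Finset (α × α), IsM M ∧ verts M = X := by
  intro n
  induction n using Nat.strong_induction_on with
  | _ n ih =>
    intro X hcard heven
    rcases Nat.eq_zero_or_pos n with rfl | hpos
    · refine ⟨∅, ⟨by simp, by simp⟩, ?_⟩
      rw [Finset.card_eq_zero] at hcard
      simp [verts, hcard]
    · have h2 : 2 ≤ n := by
        rcases heven with ⟨k, hk⟩; omega
      have hX : X.Nonempty := Finset.card_pos.1 (by omega)
      obtain ⟨x, hx⟩ := hX
      have hX' : (X.erase x).Nonempty := by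
        rw [← Finset.card_pos, Finset.card_erase_of_mem hx]; omega
      obtain ⟨y, hy⟩ := hX'
      have hyx : y ≠ x := Finset.ne_of_mem_erase hy
      have hyX : y ∈ X := Finset.mem_of_mem_erase hy
      set X' := (X.erase x).erase y with hX'def
      have hcard' : X'.card = n - 2 := by
        rw [hX'def, Finset.card_erase_of_mem hy, Finset.card_erase_of_mem hx, hcard]
        omega
      obtain ⟨M', hM', hV'⟩ := ih (n - 2) (by omega) X' hcard' (by
        rcases heven with ⟨k, hk⟩; exact ⟨k - 1, by omega⟩)
      have hxV : x ∉ verts M' := by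
        rw [hV', hX'def]; simp
      have hyV : y ∉ verts M' := by
        rw [hV', hX'def]; simp
      refine ⟨insert (x, y) M', hM'.insert (by simpa using hyx.symm) hxV hyV, ?_⟩
      rw [verts_insert, hV', hX'def]
      ext z
      simp only [Finset.mem_union, Finset.mem_insert, Finset.mem_singleton,
        Finset.mem_erase]
      constructor
      · rintro ((rfl | rfl) | ⟨_, _, h⟩) <;> assumption
      · intro hz
        by_cases h1 : z = x
        · exact Or.inl (Or.inl h1)
        by_cases h2 : z = y
        · exact Or.inl (Or.inr h2)
        · exact Or.inr ⟨h2, h1, hz⟩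

lemma augment_one {M : Finset (α × α)} (hM : IsM M) {x a : α} (hxa : x ≠ a)
    (hx : x ∈ verts M) (ha : a ∉ verts M) :
    ∃ M', IsM M' ∧ verts M' = verts M ∆ {x, a} ∧
      ∑ e ∈ M', dist e.1 e.2 ≤ ∑ e ∈ M, dist e.1 e.2 + dist x a := by
  obtain ⟨e, he, hxe⟩ := mem_verts.1 hx
  obtain ⟨hbx, hpair, hdist, hbe⟩ := other_spec hxe (hM.1 e he)
  set b := other e x with hbdef
  have hbV : b ∈ verts M := mem_verts.2 ⟨e, he, by rcases hbe with h | h <;> [exact Or.inl h; exact Or.inr h]⟩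
  have hab : a ≠ b := fun h => ha (h ▸ hbV)
  have hVer : verts (M.erase e) = verts M \ {x, b} := by
    rw [verts_erase hM he, hpair]
  have habM : (a, b) ∉ M.erase e := by
    intro h
    exact ha (mem_verts.2 ⟨(a, b), Finset.mem_of_mem_erase h, Or.inl rfl⟩)
  refine ⟨insert (a, b) (M.erase e), ?_, ?_, ?_⟩
  · refine (hM.subset (Finset.erase_subset e M)).insert hab ?_ ?_
    · rw [hVer]
      exact fun h => ha (Finset.mem_sdiff.1 h).1
    · rw [hVer]; simp
  · rw [verts_insert, hVer]
    ext z
    simp only [Finset.mem_union, Finset.mem_insert, Finset.mem_singleton,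
      Finset.mem_sdiff, Finset.mem_symmDiff, not_or]
    constructor
    · rintro ((rfl | rfl) | ⟨hzV, hzx, hzb⟩)
      · exact Or.inr ⟨Or.inr rfl, ha⟩
      · exact Or.inl ⟨hbV, hbx, fun h => hab h.symm⟩
      · exact Or.inl ⟨hzV, hzx, fun h => ha (h ▸ hzV)⟩
    · rintro (⟨hzV, hzx, _⟩ | ⟨(rfl | rfl), hz2⟩)
      · by_cases hzb : z = b
        · exact Or.inl (Or.inr hzb)
        · exact Or.inr ⟨hzV, hzx, hzb⟩
      · exact absurd hx hz2
      · exact Or.inl (Or.inl rfl)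
  · rw [Finset.sum_insert habM]
    have hsum := Finset.sum_erase_add M (fun e => dist e.1 e.2) he
    have htri : dist a b ≤ dist a x + dist x b := dist_triangle a x b
    have h1 : dist a x = dist x a := dist_comm a x
    rw [hdist] at hsum
    linarith

lemma augment {M : Finset (α × α)} (hM : IsM M) {x a : α} (hxa : x ≠ a) :
    ∃ M', IsM M' ∧ verts M' = verts M ∆ {x, a} ∧
      ∑ e ∈ M', dist e.1 e.2 ≤ ∑ e ∈ M, dist e.1 e.2 + dist x a := by
  by_cases hx : x ∈ verts M <;> by_cases ha : a ∈ verts M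
  · -- both endpoints already matched
    obtain ⟨e, he, hxe⟩ := mem_verts.1 hx
    obtain ⟨f, hf, haf⟩ := mem_verts.1 ha
    obtain ⟨hbx, hpaire, hdiste, hbe⟩ := other_spec hxe (hM.1 e he)
    obtain ⟨hca, hpairf, hdistf, hcf⟩ := other_spec haf (hM.1 f hf)
    set b := other e x with hbdef
    set c := other f a with hcdef
    by_cases hef : e = f
    · -- x and a are matched to each other
      subst hef
      have hab : a = b := by
        have : a ∈ ({e.1, e.2} : Finset α) := by
          rcases haf with h | h <;> simp [h]
        rw [hpaire] at this
        rcases Finset.mem_insert.1 this with h | h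
        · exact absurd h.symm hxa
        · exact Finset.mem_singleton.1 h
      refine ⟨M.erase e, hM.subset (Finset.erase_subset e M), ?_, ?_⟩
      · rw [verts_erase hM he, hpaire, ← hab,
          symmDiff_of_ge (by
            intro z hz
            rcases Finset.mem_insert.1 hz with rfl | hz
            · exact hx
            · rw [Finset.mem_singleton] at hz; exact hz ▸ ha)]
      · have hsub : ∑ e' ∈ M.erase e, dist e'.1 e'.2 ≤ ∑ e' ∈ M, dist e'.1 e'.2 :=
          Finset.sum_le_sum_of_subset_of_nonneg (Finset.erase_subset e M)
            (fun i _ _ => dist_nonneg)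
        linarith [dist_nonneg (x := x) (y := a)]
    · -- x and a matched to b, c in distinct edges
      obtain ⟨d1, d2, d3, d4⟩ := hM.2 e he f hf hef
      have hbV : b ∈ verts M := mem_verts.2 ⟨e, he, by rcases hbe with h | h <;> [exact Or.inl h; exact Or.inr h]⟩
      have hcV : c ∈ verts M := mem_verts.2 ⟨f, hf, by rcases hcf with h | h <;> [exact Or.inl h; exact Or.inr h]⟩
      have hbc : b ≠ c := by
        rcases hbe with h | h <;> rcases hcf with h' | h' <;> rw [h, h'] <;> assumption
      have hba : b ≠ a := by
        rcases hbe with h | h <;> rcases haf with h' | h' <;> rw [h, h'] <;> assumption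
      have hcx : c ≠ x := by
        rcases hcf with h | h <;> rcases hxe with h' | h' <;> rw [h, h'] <;>
          [exact d1.symm; exact d3.symm; exact d2.symm; exact d4.symm]
      have hfe' : f ∈ M.erase e := Finset.mem_erase.2 ⟨fun h => hef h.symm, hf⟩
      have hMe : IsM (M.erase e) := hM.subset (Finset.erase_subset e M)
      have hVer : verts ((M.erase e).erase f) = (verts M \ {x, b}) \ {a, c} := by
        rw [verts_erase hMe hfe', verts_erase hM he, hpaire, hpairf]
      have hbcM : (b, c) ∉ (M.erase e).erase f := by
        intro h
        have : b ∈ verts ((M.erase e).erase f) := mem_verts.2 ⟨(b, c), h, Or.inl rfl⟩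
        rw [hVer] at this
        exact (Finset.mem_sdiff.1 (Finset.mem_sdiff.1 this).1).2 (by simp)
      refine ⟨insert (b, c) ((M.erase e).erase f), ?_, ?_, ?_⟩
      · refine (hMe.subset (Finset.erase_subset f (M.erase e))).insert hbc ?_ ?_
        · rw [hVer]
          intro h
          exact (Finset.mem_sdiff.1 (Finset.mem_sdiff.1 h).1).2 (by simp)
        · rw [hVer]
          intro h
          exact (Finset.mem_sdiff.1 h).2 (by simp)
      · rw [verts_insert, hVer]
        ext z
        simp only [Finset.mem_union, Finset.mem_insert, Finset.mem_singleton,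
          Finset.mem_sdiff, Finset.mem_symmDiff, not_or]
        constructor
        · rintro ((rfl | rfl) | ⟨⟨hzV, hzx, hzb⟩, hza, hzc⟩)
          · exact Or.inl ⟨hbV, hbx, hba⟩
          · exact Or.inl ⟨hcV, hcx, hca⟩
          · exact Or.inl ⟨hzV, hzx, hza⟩
        · rintro (⟨hzV, hzx, hza⟩ | ⟨(rfl | rfl), hz2⟩)
          · by_cases hzb : z = b
            · exact Or.inl (Or.inl hzb)
            by_cases hzc : z = c
            · exact Or.inl (Or.inr hzc)
            · exact Or.inr ⟨⟨hzV, hzx, hzb⟩, hza, hzc⟩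
          · exact absurd hx hz2
          · exact absurd ha hz2
      · rw [Finset.sum_insert hbcM]
        have hsum1 := Finset.sum_erase_add (M.erase e) (fun e => dist e.1 e.2) hfe'
        have hsum2 := Finset.sum_erase_add M (fun e => dist e.1 e.2) he
        rw [hdistf] at hsum1
        rw [hdiste] at hsum2
        have htri : dist b c ≤ dist b x + dist x a + dist a c := dist_triangle4 b x a c
        have h1 : dist b x = dist x b := dist_comm b x
        linarith
  · exact augment_one hM hxa hx ha
  · obtain ⟨M', h1, h2, h3⟩ := augment_one hM hxa.symm ha hx
    exact ⟨M', h1, by rwa [Finset.pair_comm] at h2, by rwa [dist_comm] at h3⟩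
  · -- both endpoints unmatched
    refine ⟨insert (x, a) M, hM.insert hxa hx ha, ?_, ?_⟩
    · rw [verts_insert]
      ext z
      simp only [Finset.mem_union, Finset.mem_insert, Finset.mem_singleton,
        Finset.mem_symmDiff, not_or]
      constructor
      · rintro ((rfl | rfl) | hzV)
        · exact Or.inr ⟨Or.inl rfl, hx⟩
        · exact Or.inr ⟨Or.inr rfl, ha⟩
        · exact Or.inl ⟨hzV, fun h => hx (h ▸ hzV), fun h => ha (h ▸ hzV)⟩
      · rintro (⟨hzV, _, _⟩ | ⟨(rfl | rfl), _⟩)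
        · exact Or.inr hzV
        · exact Or.inl (Or.inl rfl)
        · exact Or.inl (Or.inr rfl)
    · have hxaM : (x, a) ∉ M := fun h => hx (mem_verts.2 ⟨(x, a), h, Or.inl rfl⟩)
      rw [Finset.sum_insert hxaM]
      linarith

lemma combine {M₂ : Finset (α × α)} (h₂ : IsM M₂) (M₁ : Finset (α × α)) (h₁ : IsM M₁) :
    ∃ N, IsM N ∧ verts N = verts M₁ ∆ verts M₂ ∧
      ∑ e ∈ N, dist e.1 e.2 ≤ ∑ e ∈ M₁, dist e.1 e.2 + ∑ e ∈ M₂, dist e.1 e.2 := by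
  classical
  induction M₁ using Finset.induction_on with
  | empty =>
    refine ⟨M₂, h₂, ?_, by simp⟩
    have h : verts (∅ : Finset (α × α)) = ∅ := by simp [verts]
    rw [h]
    have hb : (⊥ : Finset α) = ∅ := rfl
    rw [← hb, bot_symmDiff]
  | @insert e s hes ih =>
    have hs : IsM s := h₁.subset (Finset.subset_insert e s)
    obtain ⟨N', hN', hV', hc'⟩ := ih hs
    have hne : e.1 ≠ e.2 := h₁.1 e (Finset.mem_insert_self e s)
    obtain ⟨N, hN, hV, hc⟩ := augment hN' hne
    have h1 : e.1 ∉ verts s := by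
      intro h
      obtain ⟨f, hf, hef⟩ := mem_verts.1 h
      have hnef : e ≠ f := fun h' => hes (h' ▸ hf)
      obtain ⟨d1, d2, _, _⟩ := h₁.2 e (Finset.mem_insert_self e s) f
        (Finset.mem_insert_of_mem hf) hnef
      rcases hef with h' | h' <;> [exact d1 h'; exact d2 h']
    have h2 : e.2 ∉ verts s := by
      intro h
      obtain ⟨f, hf, hef⟩ := mem_verts.1 h
      have hnef : e ≠ f := fun h' => hes (h' ▸ hf)
      obtain ⟨_, _, d3, d4⟩ := h₁.2 e (Finset.mem_insert_self e s) f
        (Finset.mem_insert_of_mem hf) hnef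
      rcases hef with h' | h' <;> [exact d3 h'; exact d4 h']
    refine ⟨N, hN, ?_, ?_⟩
    · rw [hV, hV', verts_insert]
      have hdisj : Disjoint ({e.1, e.2} : Finset α) (verts s) := by
        rw [Finset.disjoint_left]
        intro z hz
        rcases Finset.mem_insert.1 hz with rfl | hz
        · exact h1
        · rw [Finset.mem_singleton] at hz; exact hz ▸ h2
      have hsup : ({e.1, e.2} : Finset α) ∪ verts s = {e.1, e.2} ∆ verts s := by
        rw [hdisj.symmDiff_eq_sup]; rfl
      rw [hsup, symmDiff_assoc, symmDiff_comm (verts M₂), ← symmDiff_assoc,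
        symmDiff_comm (verts s)]
    · have heM : e ∉ s := hes
      rw [Finset.sum_insert heM]
      linarith

lemma matchCost_set_nonempty {X : Finset α} (hX : Even X.card) :
    {c | ∃ M : Finset (α × α), IsPerfectMatchingOn X M ∧
      c = ∑ e ∈ M, dist e.1 e.2}.Nonempty := by
  obtain ⟨M, hM, hV⟩ := exists_matching X.card X rfl hX
  exact ⟨_, M, perfect_iff.2 ⟨hM, hV⟩, rfl⟩

lemma matchCost_set_bddBelow (X : Finset α) :
    BddBelow {c | ∃ M : Finset (α × α), IsPerfectMatchingOn X M ∧
      c = ∑ e ∈ M, dist e.1 e.2} := by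
  refine ⟨0, ?_⟩
  rintro c ⟨M, _, rfl⟩
  exact Finset.sum_nonneg fun e _ => dist_nonneg

/-- If `S` is a finite point set of even cardinality in a metric space and
`R ⊆ S` has even cardinality, with `B = S \ R`, then
`matchCost B ≤ matchCost S + matchCost R`. -/
theorem matching_complement_bound
    (S : Finset α) (hS : Even S.card)
    (R : Finset α) (hR : R ⊆ S) (hRe : Even R.card) :
    matchCost (S \ R) ≤ matchCost S + matchCost R := by
  classical
  have key : ∀ ε : ℝ, 0 < ε → matchCost (S \ R) ≤ matchCost S + matchCost R + ε := by
    intro ε hε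
    obtain ⟨cs, hcsmem, hcs⟩ :=
      Real.lt_sInf_add_pos (matchCost_set_nonempty hS) (half_pos hε)
    obtain ⟨cr, hcrmem, hcr⟩ :=
      Real.lt_sInf_add_pos (matchCost_set_nonempty hRe) (half_pos hε)
    obtain ⟨MS, hMS, rfl⟩ := hcsmem
    obtain ⟨MR, hMR, rfl⟩ := hcrmem
    obtain ⟨hMS', hVS⟩ := perfect_iff.1 hMS
    obtain ⟨hMR', hVR⟩ := perfect_iff.1 hMR
    obtain ⟨N, hN, hV, hc⟩ := combine hMR' MS hMS'
    have hVN : verts N = S \ R := by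
      rw [hV, hVS, hVR, symmDiff_of_ge hR]
    have hmem : (∑ e ∈ N, dist e.1 e.2) ∈ {c | ∃ M : Finset (α × α),
        IsPerfectMatchingOn (S \ R) M ∧ c = ∑ e ∈ M, dist e.1 e.2} :=
      ⟨N, perfect_iff.2 ⟨hN, hVN⟩, rfl⟩
    have hle : matchCost (S \ R) ≤ ∑ e ∈ N, dist e.1 e.2 :=
      csInf_le (matchCost_set_bddBelow (S \ R)) hmem
    have hS' : matchCost S = sInf {c | ∃ M : Finset (α × α),
        IsPerfectMatchingOn S M ∧ c = ∑ e ∈ M, dist e.1 e.2} := rfl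
    have hR' : matchCost R = sInf {c | ∃ M : Finset (α × α),
        IsPerfectMatchingOn R M ∧ c = ∑ e ∈ M, dist e.1 e.2} := rfl
    rw [hS', hR']
    linarith
  by_contra hcon
  push_neg at hcon
  have := key ((matchCost (S \ R) - (matchCost S + matchCost R)) / 2) (by linarith)
  linarith
end

section
/- Let S consist of 2n points given as n pairs {p_i, q_i} in a metric space, with n even. Call a set R ⊆ S feasible if it contains exactly one point of each pair. Let R̂ be a feasible set minimizing matchCost over all feasible sets. Then matchCost(R̂) + matchCost(S \ R̂) ≤ 2 · min over all feasible sets R of (matchCost(R) + matchCost(S \ R)). -/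
variable {α : Type*} [MetricSpace α] [DecidableEq α]

lemma match_unique {A : Finset α} {M : Finset (α × α)} (hM : IsPerfectMatchingOn A M)
    {x : α} (hx : x ∈ A) {e f : α × α} (he : e ∈ M) (hxe : x = e.1 ∨ x = e.2)
    (hf : f ∈ M) (hxf : x = f.1 ∨ x = f.2) : e = f := by
  obtain ⟨g, -, hu⟩ := hM.2 x hx
  rw [hu e ⟨he, hxe⟩, hu f ⟨hf, hxf⟩]

lemma matching_erase {A : Finset α} {M : Finset (α × α)} (hM : IsPerfectMatchingOn A M)
    {e : α × α} (he : e ∈ M) :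
    IsPerfectMatchingOn (A \ {e.1, e.2}) (M.erase e) := by
  obtain ⟨h1A, h2A, hne⟩ := hM.1 e he
  constructor
  · intro f hf
    obtain ⟨hfM, hfne⟩ := Finset.mem_erase.mp hf |>.symm.imp id id
    have hf' : f ∈ M := Finset.mem_of_mem_erase hf
    have hfe : f ≠ e := Finset.ne_of_mem_erase hf
    obtain ⟨hf1, hf2, hfne'⟩ := hM.1 f hf'
    refine ⟨?_, ?_, hfne'⟩
    · simp only [Finset.mem_sdiff, Finset.mem_insert, Finset.mem_singleton]
      refine ⟨hf1, ?_⟩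
      rintro (h | h)
      · exact hfe (match_unique hM h1A hf' (Or.inl h.symm) he (Or.inl rfl))
      · exact hfe (match_unique hM h2A hf' (Or.inl h.symm) he (Or.inr rfl))
    · simp only [Finset.mem_sdiff, Finset.mem_insert, Finset.mem_singleton]
      refine ⟨hf2, ?_⟩
      rintro (h | h)
      · exact hfe (match_unique hM h1A hf' (Or.inr h.symm) he (Or.inl rfl))
      · exact hfe (match_unique hM h2A hf' (Or.inr h.symm) he (Or.inr rfl))
  · intro x hx
    simp only [Finset.mem_sdiff, Finset.mem_insert, Finset.mem_singleton] at hx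
    obtain ⟨hxA, hxne⟩ := hx
    obtain ⟨f, ⟨hfM, hxf⟩, hu⟩ := hM.2 x hxA
    have hfe : f ≠ e := by
      rintro rfl
      rcases hxf with h | h <;> exact hxne (by tauto)
    refine ⟨f, ⟨Finset.mem_erase.mpr ⟨hfe, hfM⟩, hxf⟩, ?_⟩
    rintro g ⟨hgM, hxg⟩
    exact hu g ⟨Finset.mem_of_mem_erase hgM, hxg⟩

lemma exists_partner {A : Finset α} {M : Finset (α × α)} (hM : IsPerfectMatchingOn A M)
    {x : α} (hx : x ∈ A) :
    ∃ (a : α) (e : α × α), e ∈ M ∧ a ∈ A ∧ a ≠ x ∧ (x = e.1 ∨ x = e.2) ∧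
      dist e.1 e.2 = dist x a ∧
      IsPerfectMatchingOn (A \ {x, a}) (M.erase e) ∧
      ∑ f ∈ M.erase e, dist f.1 f.2 = ∑ f ∈ M, dist f.1 f.2 - dist x a := by
  obtain ⟨e, ⟨heM, hxe⟩, -⟩ := hM.2 x hx
  obtain ⟨h1A, h2A, hne⟩ := hM.1 e heM
  have hsum : ∑ f ∈ M.erase e, dist f.1 f.2 = ∑ f ∈ M, dist f.1 f.2 - dist e.1 e.2 := by
    rw [← Finset.sum_erase_add M _ heM]; ring
  rcases hxe with h | h
  · refine ⟨e.2, e, heM, h2A, by rw [← h] at hne; exact fun hh => hne hh.symm, Or.inl h, by rw [h], ?_, by rw [hsum, h]⟩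
    have := matching_erase hM heM
    rwa [show ({e.1, e.2} : Finset α) = {x, e.2} by rw [h]] at this
  · refine ⟨e.1, e, heM, h1A, by rw [← h] at hne; exact hne, Or.inr h, by rw [h, dist_comm], ?_, by rw [hsum, h, dist_comm]⟩
    have := matching_erase hM heM
    rwa [show ({e.1, e.2} : Finset α) = {x, e.1} by rw [h, Finset.pair_comm]] at this

lemma matching_insert {A : Finset α} {M : Finset (α × α)} (hM : IsPerfectMatchingOn A M)
    {a b : α} (ha : a ∉ A) (hb : b ∉ A) (hab : a ≠ b) :
    IsPerfectMatchingOn (insert a (insert b A)) (insert (a, b) M) ∧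
      ∑ f ∈ insert (a, b) M, dist f.1 f.2 = dist a b + ∑ f ∈ M, dist f.1 f.2 := by
  have hnm : (a, b) ∉ M := fun h => ha (hM.1 _ h).1
  constructor
  · constructor
    · intro f hf
      rcases Finset.mem_insert.mp hf with rfl | hf
      · exact ⟨Finset.mem_insert_self _ _, Finset.mem_insert.mpr (Or.inr (Finset.mem_insert_self _ _)), hab⟩
      · obtain ⟨h1, h2, h3⟩ := hM.1 f hf
        exact ⟨by simp [h1], by simp [h2], h3⟩
    · intro x hx
      rcases Finset.mem_insert.mp hx with hxa | hx
      · refine ⟨(a, b), ⟨Finset.mem_insert_self _ _, Or.inl hxa⟩, ?_⟩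
        rintro g ⟨hgM, hxg⟩
        rcases Finset.mem_insert.mp hgM with h | hgM
        · exact h
        · obtain ⟨h1, h2, -⟩ := hM.1 g hgM
          rcases hxg with h | h
          · exact absurd (by rw [← h, hxa] at h1; exact h1) ha
          · exact absurd (by rw [← h, hxa] at h2; exact h2) ha
      rcases Finset.mem_insert.mp hx with hxb | hx
      · refine ⟨(a, b), ⟨Finset.mem_insert_self _ _, Or.inr hxb⟩, ?_⟩
        rintro g ⟨hgM, hxg⟩
        rcases Finset.mem_insert.mp hgM with h | hgM
        · exact h
        · obtain ⟨h1, h2, -⟩ := hM.1 g hgM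
          rcases hxg with h | h
          · exact absurd (by rw [← h, hxb] at h1; exact h1) hb
          · exact absurd (by rw [← h, hxb] at h2; exact h2) hb
      · obtain ⟨f, ⟨hfM, hxf⟩, hu⟩ := hM.2 x hx
        refine ⟨f, ⟨Finset.mem_insert.mpr (Or.inr hfM), hxf⟩, ?_⟩
        rintro g ⟨hgM, hxg⟩
        rcases Finset.mem_insert.mp hgM with hg | hgM
        · rcases hxg with h | h
          · exact absurd (by rw [← show x = a by rw [h, hg]]; exact hx) ha
          · exact absurd (by rw [← show x = b by rw [h, hg]]; exact hx) hb
        · exact hu g ⟨hgM, hxg⟩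
  · exact Finset.sum_insert hnm

lemma matching_union {A B : Finset α} {M N : Finset (α × α)}
    (hM : IsPerfectMatchingOn A M) (hN : IsPerfectMatchingOn B N) (hd : Disjoint A B) :
    IsPerfectMatchingOn (A ∪ B) (M ∪ N) ∧
      ∑ f ∈ M ∪ N, dist f.1 f.2 = ∑ f ∈ M, dist f.1 f.2 + ∑ f ∈ N, dist f.1 f.2 := by
  have hMN : Disjoint M N := by
    rw [Finset.disjoint_left]
    intro e heM heN
    exact (Finset.disjoint_left.mp hd) (hM.1 e heM).1 (hN.1 e heN).1
  constructor
  · constructor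
    · intro f hf
      rcases Finset.mem_union.mp hf with hf | hf
      · obtain ⟨h1, h2, h3⟩ := hM.1 f hf
        exact ⟨Finset.mem_union_left _ h1, Finset.mem_union_left _ h2, h3⟩
      · obtain ⟨h1, h2, h3⟩ := hN.1 f hf
        exact ⟨Finset.mem_union_right _ h1, Finset.mem_union_right _ h2, h3⟩
    · intro x hx
      rcases Finset.mem_union.mp hx with hx | hx
      · obtain ⟨f, ⟨hfM, hxf⟩, hu⟩ := hM.2 x hx
        refine ⟨f, ⟨Finset.mem_union_left _ hfM, hxf⟩, ?_⟩
        rintro g ⟨hgMN, hxg⟩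
        rcases Finset.mem_union.mp hgMN with hg | hg
        · exact hu g ⟨hg, hxg⟩
        · obtain ⟨h1, h2, -⟩ := hN.1 g hg
          rcases hxg with h | h
          · exact absurd (h ▸ hx) (Finset.disjoint_left.mp hd.symm (h ▸ h1))
          · exact absurd (h ▸ hx) (Finset.disjoint_left.mp hd.symm (h ▸ h2))
      · obtain ⟨f, ⟨hfN, hxf⟩, hu⟩ := hN.2 x hx
        refine ⟨f, ⟨Finset.mem_union_right _ hfN, hxf⟩, ?_⟩
        rintro g ⟨hgMN, hxg⟩
        rcases Finset.mem_union.mp hgMN with hg | hg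
        · obtain ⟨h1, h2, -⟩ := hM.1 g hg
          rcases hxg with h | h
          · exact absurd (h ▸ hx) (Finset.disjoint_left.mp hd (h ▸ h1))
          · exact absurd (h ▸ hx) (Finset.disjoint_left.mp hd (h ▸ h2))
        · exact hu g ⟨hg, hxg⟩
  · exact Finset.sum_union hMN

lemma cost_nonneg (M : Finset (α × α)) : (0:ℝ) ≤ ∑ e ∈ M, dist e.1 e.2 :=
  Finset.sum_nonneg fun _ _ => dist_nonneg

lemma matching_exists (X : Finset α) (h : Even X.card) :
    ∃ M : Finset (α × α), IsPerfectMatchingOn X M := by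
  obtain ⟨k, hk⟩ := h
  suffices H : ∀ (k : ℕ) (X : Finset α), X.card = k + k →
      ∃ M : Finset (α × α), IsPerfectMatchingOn X M from H k X hk
  clear hk X
  intro k
  induction k with
  | zero =>
    intro X hk
    have : X = ∅ := Finset.card_eq_zero.mp (by omega)
    exact ⟨∅, by simp [this, IsPerfectMatchingOn]⟩
  | succ m ih =>
    intro X hk
    have hc : 2 ≤ X.card := by omega
    obtain ⟨x, hx⟩ := Finset.card_pos.mp (show 0 < X.card by omega)
    obtain ⟨y, hy, hyx⟩ := Finset.exists_mem_ne (show 1 < X.card by omega) x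
    have hcard : (X \ {x, y}).card = m + m := by
      rw [Finset.card_sdiff_of_subset (by intro z hz; simp at hz; rcases hz with rfl | rfl <;> assumption)]
      simp [Finset.card_pair (Ne.symm hyx)]; omega
    obtain ⟨M, hM⟩ := ih _ hcard
    have hxn : x ∉ X \ {x, y} := by simp
    have hyn : y ∉ X \ {x, y} := by simp
    obtain ⟨hM', -⟩ := matching_insert hM hxn hyn (Ne.symm hyx)
    refine ⟨insert (x, y) M, ?_⟩
    have : insert x (insert y (X \ {x, y})) = X := by
      ext z
      simp only [Finset.mem_insert, Finset.mem_sdiff, Finset.mem_singleton]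
      constructor
      · rintro (rfl | rfl | ⟨hz, -⟩) <;> assumption
      · intro hz
        by_cases h1 : z = x; · tauto
        by_cases h2 : z = y; · tauto
        tauto
    rwa [this] at hM'

lemma matchCost_le {X : Finset α} {M : Finset (α × α)} (hM : IsPerfectMatchingOn X M) :
    matchCost X ≤ ∑ e ∈ M, dist e.1 e.2 :=
  csInf_le ⟨0, fun c ⟨N, _, hc⟩ => hc ▸ cost_nonneg N⟩ ⟨M, hM, rfl⟩

lemma matchCost_attained (X : Finset α) (h : Even X.card) :
    ∃ M : Finset (α × α), IsPerfectMatchingOn X M ∧ matchCost X = ∑ e ∈ M, dist e.1 e.2 := by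
  have hfin : {c : ℝ | ∃ M : Finset (α × α), IsPerfectMatchingOn X M ∧
      c = ∑ e ∈ M, dist e.1 e.2}.Finite := by
    have : {c : ℝ | ∃ M : Finset (α × α), IsPerfectMatchingOn X M ∧
        c = ∑ e ∈ M, dist e.1 e.2} ⊆
        (fun M : Finset (α × α) => ∑ e ∈ M, dist e.1 e.2) '' {M | M ∈ (X ×ˢ X).powerset} := by
      rintro c ⟨M, hM, rfl⟩
      refine ⟨M, ?_, rfl⟩
      simp only [Set.mem_setOf_eq, Finset.mem_powerset]
      intro e he
      exact Finset.mem_product.mpr ⟨(hM.1 e he).1, (hM.1 e he).2.1⟩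
    exact Set.Finite.subset (Set.Finite.image _ ((X ×ˢ X).powerset.finite_toSet)) this
  obtain ⟨M, hM⟩ := matching_exists X h
  have hne : {c : ℝ | ∃ M : Finset (α × α), IsPerfectMatchingOn X M ∧
      c = ∑ e ∈ M, dist e.1 e.2}.Nonempty := ⟨_, M, hM, rfl⟩
  have := hne.csInf_mem hfin
  obtain ⟨N, hN, hc⟩ := this
  exact ⟨N, hN, hc⟩

lemma card_sdiff_lt {s t : Finset α} {x : α} (hx : x ∈ s) (hxt : x ∈ t) :
    (s \ t).card < s.card :=
  Finset.card_lt_card ((Finset.ssubset_iff_of_subset Finset.sdiff_subset).mpr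
    ⟨x, hx, by simp [hxt]⟩)

set_option maxHeartbeats 2000000 in
lemma symmdiff_matching :
    ∀ (k : ℕ) (A B : Finset α) (M N : Finset (α × α)), (A ∩ B).card = k →
      IsPerfectMatchingOn A M → IsPerfectMatchingOn B N →
      ∃ P : Finset (α × α), IsPerfectMatchingOn ((A \ B) ∪ (B \ A)) P ∧
        ∑ e ∈ P, dist e.1 e.2 ≤ ∑ e ∈ M, dist e.1 e.2 + ∑ e ∈ N, dist e.1 e.2 := by
  intro k
  induction k using Nat.strong_induction_on with
  | _ k IH =>
  intro A B M N hk hM hN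
  rcases Finset.eq_empty_or_nonempty (A ∩ B) with hAB | ⟨x, hx⟩
  · have hd : Disjoint A B := Finset.disjoint_iff_inter_eq_empty.mpr hAB
    obtain ⟨hP, hsum⟩ := matching_union hM hN hd
    have h1 : A \ B = A := Finset.sdiff_eq_self_iff_disjoint.mpr hd
    have h2 : B \ A = B := Finset.sdiff_eq_self_iff_disjoint.mpr hd.symm
    exact ⟨M ∪ N, by rwa [h1, h2], le_of_eq hsum⟩
  have hxA : x ∈ A := (Finset.mem_inter.mp hx).1
  have hxB : x ∈ B := (Finset.mem_inter.mp hx).2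
  obtain ⟨a, e, heM, haA, hax, hxe, hde, hMe, hsMe⟩ := exists_partner hM hxA
  obtain ⟨b, f, hfN, hbB, hbx, hxf, hdf, hNf, hsNf⟩ := exists_partner hN hxB
  by_cases hab : a = b
  · subst hab
    have hinter : (A \ {x, a}) ∩ (B \ {x, a}) = (A ∩ B) \ {x, a} := by
      ext y
      simp only [Finset.mem_inter, Finset.mem_sdiff, Finset.mem_insert, Finset.mem_singleton]
      tauto
    have hlt : ((A \ {x, a}) ∩ (B \ {x, a})).card < k := by
      rw [hinter, ← hk]
      exact card_sdiff_lt hx (by simp)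
    obtain ⟨P, hP, hPs⟩ := IH _ hlt _ _ _ _ rfl hMe hNf
    have hsym : ((A \ {x, a}) \ (B \ {x, a})) ∪ ((B \ {x, a}) \ (A \ {x, a}))
        = (A \ B) ∪ (B \ A) := by
      have haB : a ∈ B := hbB
      ext y
      simp only [Finset.mem_union, Finset.mem_sdiff, Finset.mem_insert, Finset.mem_singleton]
      by_cases h1 : y = x <;> by_cases h2 : y = a <;> simp_all <;> tauto
    refine ⟨P, by rwa [hsym] at hP, ?_⟩
    have h0 := dist_nonneg (x := x) (y := a)
    rw [hsMe, hsNf] at hPs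
    linarith
  by_cases haB : a ∈ B <;> by_cases hbA : b ∈ A
  · -- Case 5 : a ∈ B, b ∈ A
    have hbA' : b ∈ A \ {x, a} := by simp [hbA, hbx, hab]; tauto
    obtain ⟨c, g, hgM, hcA, hcb, hbg, hdg, hMg, hsMg⟩ := exists_partner hMe hbA'
    have hcx : c ≠ x := by intro h; rw [h] at hcA; simp at hcA
    have hca : c ≠ a := by intro h; rw [h] at hcA; simp at hcA
    have hcA0 : c ∈ A := (Finset.mem_sdiff.mp hcA).1
    have han : a ∉ (A \ {x, a}) \ {b, c} := by simp
    have hcn : c ∉ (A \ {x, a}) \ {b, c} := by simp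
    obtain ⟨hM2, hsM2⟩ := matching_insert hMg han hcn (Ne.symm hca)
    have hA2 : insert a (insert c ((A \ {x, a}) \ {b, c})) = A \ {x, b} := by
      ext y
      simp only [Finset.mem_insert, Finset.mem_sdiff, Finset.mem_singleton]
      by_cases h1 : y = x <;> by_cases h2 : y = a <;> by_cases h3 : y = b <;>
        by_cases h4 : y = c <;> simp_all <;> tauto
    rw [hA2] at hM2
    have hinter : (A \ {x, b}) ∩ (B \ {x, b}) = (A ∩ B) \ {x, b} := by
      ext y
      simp only [Finset.mem_inter, Finset.mem_sdiff, Finset.mem_insert, Finset.mem_singleton]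
      tauto
    have hlt : ((A \ {x, b}) ∩ (B \ {x, b})).card < k := by
      rw [hinter, ← hk]
      exact card_sdiff_lt hx (by simp)
    obtain ⟨P, hP, hPs⟩ := IH _ hlt _ _ _ _ rfl hM2 hNf
    have hsym : ((A \ {x, b}) \ (B \ {x, b})) ∪ ((B \ {x, b}) \ (A \ {x, b}))
        = (A \ B) ∪ (B \ A) := by
      ext y
      simp only [Finset.mem_union, Finset.mem_sdiff, Finset.mem_insert, Finset.mem_singleton]
      by_cases h1 : y = x <;> by_cases h3 : y = b <;> simp_all <;> tauto
    refine ⟨P, by rwa [hsym] at hP, ?_⟩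
    rw [hsM2, hsMg, hsMe, hsNf] at hPs
    have ht : dist a c ≤ dist a x + dist x b + dist b c := dist_triangle4 a x b c
    have h1 : dist a x = dist x a := dist_comm a x
    linarith
  · -- Case 3 : a ∈ B, b ∉ A
    have han : a ∉ A \ {x, a} := by simp
    have hbn : b ∉ A \ {x, a} := by simp [hbA]
    obtain ⟨hM2, hsM2⟩ := matching_insert hMe han hbn hab
    have hinter : (insert a (insert b (A \ {x, a}))) ∩ (B \ {x, b}) = (A ∩ B) \ {x} := by
      ext y
      simp only [Finset.mem_inter, Finset.mem_sdiff, Finset.mem_insert, Finset.mem_singleton]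
      by_cases h1 : y = x <;> by_cases h2 : y = a <;> by_cases h3 : y = b <;>
        simp_all <;> tauto
    have hlt : ((insert a (insert b (A \ {x, a}))) ∩ (B \ {x, b})).card < k := by
      rw [hinter, ← hk]
      exact card_sdiff_lt hx (by simp)
    obtain ⟨P, hP, hPs⟩ := IH _ hlt _ _ _ _ rfl hM2 hNf
    have hsym : ((insert a (insert b (A \ {x, a}))) \ (B \ {x, b}))
        ∪ ((B \ {x, b}) \ (insert a (insert b (A \ {x, a})))) = (A \ B) ∪ (B \ A) := by
      ext y
      simp only [Finset.mem_union, Finset.mem_sdiff, Finset.mem_insert, Finset.mem_singleton]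
      by_cases h1 : y = x <;> by_cases h2 : y = a <;> by_cases h3 : y = b <;>
        simp_all <;> tauto
    refine ⟨P, by rwa [hsym] at hP, ?_⟩
    rw [hsM2, hsMe, hsNf] at hPs
    have ht : dist a b ≤ dist a x + dist x b := dist_triangle a x b
    have h1 : dist a x = dist x a := dist_comm a x
    linarith
  · -- Case 4 : a ∉ B, b ∈ A
    have hbn : b ∉ B \ {x, b} := by simp
    have han : a ∉ B \ {x, b} := by simp [haB]
    obtain ⟨hN2, hsN2⟩ := matching_insert hNf han hbn hab
    have hinter : (A \ {x, a}) ∩ (insert a (insert b (B \ {x, b}))) = (A ∩ B) \ {x} := by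
      ext y
      simp only [Finset.mem_inter, Finset.mem_sdiff, Finset.mem_insert, Finset.mem_singleton]
      by_cases h1 : y = x <;> by_cases h2 : y = a <;> by_cases h3 : y = b <;>
        simp_all <;> tauto
    have hlt : ((A \ {x, a}) ∩ (insert a (insert b (B \ {x, b})))).card < k := by
      rw [hinter, ← hk]
      exact card_sdiff_lt hx (by simp)
    obtain ⟨P, hP, hPs⟩ := IH _ hlt _ _ _ _ rfl hMe hN2
    have hsym : ((A \ {x, a}) \ (insert a (insert b (B \ {x, b}))))
        ∪ ((insert a (insert b (B \ {x, b}))) \ (A \ {x, a})) = (A \ B) ∪ (B \ A) := by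
      ext y
      simp only [Finset.mem_union, Finset.mem_sdiff, Finset.mem_insert, Finset.mem_singleton]
      by_cases h1 : y = x <;> by_cases h2 : y = a <;> by_cases h3 : y = b <;>
        simp_all <;> tauto
    refine ⟨P, by rwa [hsym] at hP, ?_⟩
    rw [hsMe, hsN2, hsNf] at hPs
    have ht : dist a b ≤ dist a x + dist x b := dist_triangle a x b
    have h1 : dist a x = dist x a := dist_comm a x
    linarith
  · -- Case 2 : a ∉ B, b ∉ A
    have hinter : (A \ {x, a}) ∩ (B \ {x, b}) = (A ∩ B) \ {x} := by
      ext y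
      simp only [Finset.mem_inter, Finset.mem_sdiff, Finset.mem_insert, Finset.mem_singleton]
      by_cases h1 : y = x <;> by_cases h2 : y = a <;> by_cases h3 : y = b <;>
        simp_all <;> tauto
    have hlt : ((A \ {x, a}) ∩ (B \ {x, b})).card < k := by
      rw [hinter, ← hk]
      exact card_sdiff_lt hx (by simp)
    obtain ⟨P, hP, hPs⟩ := IH _ hlt _ _ _ _ rfl hMe hNf
    set D' := ((A \ {x, a}) \ (B \ {x, b})) ∪ ((B \ {x, b}) \ (A \ {x, a})) with hD'
    have haD : a ∉ D' := by simp [hD', haB]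
    have hbD : b ∉ D' := by simp [hD', hbA]
    obtain ⟨hP2, hsP2⟩ := matching_insert hP haD hbD hab
    have hsym : insert a (insert b D') = (A \ B) ∪ (B \ A) := by
      ext y
      simp only [hD', Finset.mem_union, Finset.mem_sdiff, Finset.mem_insert,
        Finset.mem_singleton]
      by_cases h1 : y = x <;> by_cases h2 : y = a <;> by_cases h3 : y = b <;>
        simp_all <;> tauto
    refine ⟨insert (a, b) P, by rwa [hsym] at hP2, ?_⟩
    rw [hsP2]
    rw [hsMe, hsNf] at hPs
    have ht : dist a b ≤ dist a x + dist x b := dist_triangle a x b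
    have h1 : dist a x = dist x a := dist_comm a x
    linarith

/-- `S` consists of `n` pairs `{pts (i, false), pts (i, true)}` with `n`
even; feasible sets (containing exactly one point of each pair) are the sets
`{pts (i, σ i) : i}` for `σ : Fin n → Bool`. If `R̂` is a feasible set of minimum
`matchCost`, then
`matchCost R̂ + matchCost (S \ R̂) ≤ 2 · min over feasible R of (matchCost R + matchCost (S \ R))`. -/
theorem min_sum_two_matching_two_approx
    (n : ℕ) (hn : 1 ≤ n) (hneven : Even n)
    (pts : Fin n × Bool → α) (hinj : Function.Injective pts)
    (S : Finset α) (hS : S = Finset.image pts Finset.univ)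
    (σhat : Fin n → Bool) (Rhat : Finset α)
    (hRhat : Rhat = Finset.image (fun i => pts (i, σhat i)) Finset.univ)
    (hmin : ∀ σ : Fin n → Bool,
      matchCost Rhat ≤ matchCost (Finset.image (fun i => pts (i, σ i)) Finset.univ)) :
    matchCost Rhat + matchCost (S \ Rhat) ≤ 2 *
      ⨅ σ : Fin n → Bool,
        (matchCost (Finset.image (fun i => pts (i, σ i)) Finset.univ) +
         matchCost (S \ Finset.image (fun i => pts (i, σ i)) Finset.univ)) := by
  set R : (Fin n → Bool) → Finset α :=
    fun σ => Finset.image (fun i => pts (i, σ i)) Finset.univ with hR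
  have hinjσ : ∀ σ : Fin n → Bool, Function.Injective (fun i => pts (i, σ i)) := by
    intro σ i j h
    have := hinj h
    exact (Prod.mk.injEq _ _ _ _).mp this |>.1
  have hcard : ∀ σ, (R σ).card = n := by
    intro σ
    rw [hR]
    rw [Finset.card_image_of_injective _ (hinjσ σ), Finset.card_univ, Fintype.card_fin]
  have hsub : ∀ σ, R σ ⊆ S := by
    intro σ x hx
    rw [hS]
    simp only [hR, Finset.mem_image, Finset.mem_univ, true_and] at hx ⊢
    obtain ⟨i, hi⟩ := hx
    exact ⟨(i, σ i), hi⟩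
  have hcompl : ∀ σ, S \ R σ = R (fun i => !σ i) := by
    intro σ
    ext y
    simp only [hR, hS, Finset.mem_sdiff, Finset.mem_image, Finset.mem_univ, true_and]
    constructor
    · rintro ⟨⟨⟨i, b⟩, rfl⟩, hnot⟩
      refine ⟨i, ?_⟩
      by_cases hb : b = σ i
      · exact absurd ⟨i, by rw [hb]⟩ hnot
      · congr 1
        ext
        · rfl
        · simp only []
          cases b <;> cases hσ : σ i <;> simp_all
    · rintro ⟨i, rfl⟩
      refine ⟨⟨(i, !σ i), rfl⟩, ?_⟩
      rintro ⟨j, hj⟩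
      have := hinj hj
      have h1 : j = i := ((Prod.mk.injEq _ _ _ _).mp this).1
      have h2 : σ j = !σ i := ((Prod.mk.injEq _ _ _ _).mp this).2
      rw [h1] at h2
      simp at h2
  have key : ∀ σ : Fin n → Bool, matchCost Rhat + matchCost (S \ Rhat) ≤
      2 * (matchCost (R σ) + matchCost (S \ R σ)) := by
    intro σ
    obtain ⟨M1, hM1, hc1⟩ := matchCost_attained (R σ) (by rw [hcard]; exact hneven)
    obtain ⟨M2, hM2, hc2⟩ := matchCost_attained (S \ R σ)
      (by rw [hcompl, hcard]; exact hneven)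
    obtain ⟨Mh, hMh, hch⟩ := matchCost_attained Rhat
      (by rw [hRhat]; show Even (R σhat).card; rw [hcard]; exact hneven)
    have hdisj : Disjoint (R σ) (S \ R σ) := Finset.disjoint_sdiff
    obtain ⟨hMS, hsMS⟩ := matching_union hM1 hM2 hdisj
    have hUS : R σ ∪ (S \ R σ) = S := Finset.union_sdiff_of_subset (hsub σ)
    rw [hUS] at hMS
    obtain ⟨P, hP, hPs⟩ := symmdiff_matching ((S ∩ Rhat).card) S Rhat _ _ rfl hMS hMh
    have hhatsub : Rhat ⊆ S := by rw [hRhat]; show R σhat ⊆ S; exact hsub σhat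
    have hempty : Rhat \ S = ∅ := Finset.sdiff_eq_empty_iff_subset.mpr hhatsub
    rw [hempty, Finset.union_empty] at hP
    have h1 : matchCost (S \ Rhat) ≤ ∑ e ∈ P, dist e.1 e.2 := matchCost_le hP
    have h2 : matchCost Rhat ≤ matchCost (R σ) := hmin σ
    have h3 : matchCost Rhat ≤ matchCost (S \ R σ) := by
      rw [hcompl]; exact hmin _
    rw [hsMS] at hPs
    rw [← hc1, ← hc2, ← hch] at hPs
    linarith
  have hhalf : (matchCost Rhat + matchCost (S \ Rhat)) / 2 ≤
      ⨅ σ : Fin n → Bool, (matchCost (R σ) + matchCost (S \ R σ)) := by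
    apply le_ciInf
    intro σ
    linarith [key σ]
  simp only [hR] at hhalf
  linarith
end

section
/- Let V be a finite set, let σ and τ be fixed-point-free involutions of V (σ(v) ≠ v and τ(v) ≠ v for all v), and let c : V → {red, blue} be a coloring satisfying c(σ(v)) ≠ c(v) and c(τ(v)) = c(v) for all v ∈ V. Then the cardinality of every orbit of the action on V of the subgroup of permutations generated by σ and τ is divisible by 4. -/
/-!
An orbit `O` of `⟨σ, τ⟩` is preserved by `σ` and `τ`. Since `σ` swaps the two colour classes
of `O`, `|O|` is twice the number of red points of `O`; since `τ` restricts to a fixed-point-free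
involution of those red points, that number is even.
-/

open Function

theorem Function.Involutive.two_dvd_card_of_forall_ne {α : Type*} [Finite α] {f : α → α}
    (hf : Involutive f) (hfix : ∀ x, f x ≠ x) : 2 ∣ Nat.card α := by
  classical
  have := Fintype.ofFinite α
  have hsupp : hf.toPerm.support = Finset.univ :=
    Finset.eq_univ_of_forall fun x => Equiv.Perm.mem_support.2 (hfix x)
  rw [Nat.card_eq_fintype_card, ← Finset.card_univ, ← hsupp]
  exact Equiv.Perm.two_dvd_card_support (Equiv.ext fun x => hf x)

theorem card_eq_two_mul_card_of_colour_flip {α : Type*} [Finite α] (σ : α ≃ α) (c : α → Bool)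
    (hcσ : ∀ x, c (σ x) ≠ c x) : Nat.card α = 2 * Nat.card {x // c x = true} := by
  have hswap : {x // ¬c x = true} ≃ {x // c x = true} :=
    σ.subtypeEquiv fun x => by cases h : c x <;> simpa [h] using hcσ x
  rw [← Nat.card_congr (Equiv.sumCompl fun x => c x = true), Nat.card_sum, Nat.card_congr hswap]
  ring

theorem four_dvd_card_of_colour_flip_of_involutive {α : Type*} [Finite α] (σ : α ≃ α)
    {τ : α → α} (hτinv : Involutive τ) (hτfix : ∀ x, τ x ≠ x) (c : α → Bool)
    (hcσ : ∀ x, c (σ x) ≠ c x) (hcτ : ∀ x, c (τ x) = c x) : 4 ∣ Nat.card α := by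
  let τRed : {x // c x = true} → {x // c x = true} :=
    Subtype.map τ fun x hx => (hcτ x).trans hx
  have hred : 2 ∣ Nat.card {x // c x = true} :=
    Involutive.two_dvd_card_of_forall_ne (f := τRed) (fun x => Subtype.ext (hτinv x))
      fun x h => hτfix x (congrArg Subtype.val h)
  rw [card_eq_two_mul_card_of_colour_flip σ c hcσ]
  exact Nat.mul_dvd_mul_left 2 hred

theorem orbit_card_div_four_general {V : Type*} [Fintype V]
    (σ τ : Equiv.Perm V)
    (hτinv : ∀ v, τ (τ v) = v) (hτfpf : ∀ v, τ v ≠ v)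
    (c : V → Bool)
    (hcσ : ∀ v, c (σ v) ≠ c v) (hcτ : ∀ v, c (τ v) = c v) :
    ∀ v : V,
      4 ∣ Nat.card
        (MulAction.orbit (↥(Subgroup.closure ({σ, τ} : Set (Equiv.Perm V)))) v) := by
  intro v
  set G := Subgroup.closure ({σ, τ} : Set (Equiv.Perm V))
  let σ' : G := ⟨σ, Subgroup.subset_closure (Set.mem_insert σ _)⟩
  let τ' : G := ⟨τ, Subgroup.subset_closure (Set.mem_insert_of_mem σ rfl)⟩
  exact four_dvd_card_of_colour_flip_of_involutive (MulAction.toPerm σ') (τ := (τ' • ·))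
    (fun x => Subtype.ext (hτinv x)) (fun x h => hτfpf x (congrArg Subtype.val h))
    (fun x : MulAction.orbit G v => c x) (fun x => hcσ x) (fun x => hcτ x)

/-- If `σ` and `τ` are fixed-point-free involutions of a finite set `V`
and `c : V → Bool` is a coloring with `c (σ v) ≠ c v` and `c (τ v) = c v` for all `v`,
then every orbit of the subgroup generated by `σ` and `τ` has cardinality divisible
by `4`. -/
theorem orbit_card_div_four {V : Type*} [Fintype V]
    (σ τ : Equiv.Perm V)
    (hσinv : ∀ v, σ (σ v) = v) (hσfpf : ∀ v, σ v ≠ v)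
    (hτinv : ∀ v, τ (τ v) = v) (hτfpf : ∀ v, τ v ≠ v)
    (c : V → Bool)
    (hcσ : ∀ v, c (σ v) ≠ c v) (hcτ : ∀ v, c (τ v) = c v) :
    ∀ v : V,
      4 ∣ Nat.card
        (MulAction.orbit (↥(Subgroup.closure ({σ, τ} : Set (Equiv.Perm V)))) v) :=
  orbit_card_div_four_general σ τ hτinv hτfpf c hcσ hcτ
end

section
/- Let S consist of 2n points given as n pairs {p_i, q_i} in a metric space, with n ≥ 3, and let μ > 0 and β ≥ 1. Suppose S = R_0 ∪ B_0 is a feasible coloring with d(R_0, B_0) > 0 and d(R_0, B_0) ≥ μ · (tspCost(R_0) + tspCost(B_0)), where d(R_0, B_0) = min{ d(x, y) : x ∈ R_0, y ∈ B_0 }. Let C be any Hamiltonian cycle on S whose total length is at most β · tspCost(S). Then the number of edges of C having one endpoint in R_0 and the other in B_0 is at most (2 + 1/μ) · β. -/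
variable {α : Type*} [MetricSpace α] [DecidableEq α]

/-- The total length of the closed tour visiting the points of `l` in order
(each element of `l` is joined to its cyclic successor). -/
noncomputable def cycleWeight (l : List α) : ℝ :=
  ((l.zip (l.rotate 1)).map (fun e => dist e.1 e.2)).sum

/-- The minimum total length of a Hamiltonian cycle through the finite point set `X`. -/
noncomputable def tspCost (X : Finset α) : ℝ :=
  sInf {c | ∃ l : List α, l.Nodup ∧ l.toFinset = X ∧ c = cycleWeight l}

/-- The minimum point-wise distance between two finite sets. -/
noncomputable def setDist (X Y : Finset α) : ℝ :=
  sInf {c | ∃ x ∈ X, ∃ y ∈ Y, c = dist x y}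

/-!
Every crossing edge of the tour `l` is at least `d = d(R₀, B₀)` long, so `m` crossing edges
give `m · d ≤ w(l) ≤ β · tspCost S`. On the other hand, opening optimal tours of `R₀` and `B₀`
at a closest pair `x ∈ R₀`, `y ∈ B₀` and joining them through `x — y` twice gives
`tspCost S ≤ tspCost R₀ + tspCost B₀ + 2d ≤ d/μ + 2d`. Dividing by `d > 0` yields the bound.
-/

section Tours

variable {M : Type*} [MetricSpace M]

noncomputable def pathWeight : List M → ℝ
  | a :: b :: t => dist a b + pathWeight (b :: t)
  | _ => 0

@[simp]
theorem pathWeight_cons_cons (a b : M) (t : List M) :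
    pathWeight (a :: b :: t) = dist a b + pathWeight (b :: t) := rfl

@[simp]
theorem pathWeight_singleton (a : M) : pathWeight [a] = 0 := rfl

theorem pathWeight_cons_append_cons (a b : M) (l m : List M) :
    pathWeight ((a :: l) ++ (b :: m)) = pathWeight (a :: l) + dist (l.getLastD a) b
      + pathWeight (b :: m) := by
  induction l generalizing a with
  | nil => simp
  | cons c l ih =>
    simp only [List.cons_append, pathWeight_cons_cons, List.getLastD_cons]
    rw [← List.cons_append, ih]
    ring

theorem pathWeight_cons_concat (a b : M) (l : List M) :
    pathWeight ((a :: l) ++ [b]) = pathWeight (a :: l) + dist (l.getLastD a) b := by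
  simpa using pathWeight_cons_append_cons a b l []

theorem cycleWeight_cons (a : M) (t : List M) :
    cycleWeight (a :: t) = pathWeight (a :: t) + dist (t.getLastD a) a := by
  have zip_sum : ∀ b c : M, (((b :: t).zip (t ++ [c])).map fun e => dist e.1 e.2).sum
      = pathWeight ((b :: t) ++ [c]) := by
    induction t with
    | nil => simp
    | cons d t ih => intro b c; simp [ih]
  rw [cycleWeight, show (a :: t).rotate 1 = t ++ [a] by simp, zip_sum, pathWeight_cons_concat]

theorem cycleWeight_cons_eq_concat (a : M) (t : List M) :
    cycleWeight (a :: t) = cycleWeight (t ++ [a]) := by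
  cases t with
  | nil => rfl
  | cons b t =>
    rw [List.cons_append, cycleWeight_cons, cycleWeight_cons, pathWeight_cons_cons,
      List.getLastD_cons, List.getLastD_concat, ← List.cons_append, pathWeight_cons_concat]
    ring

theorem cycleWeight_append_comm (l₁ l₂ : List M) :
    cycleWeight (l₁ ++ l₂) = cycleWeight (l₂ ++ l₁) := by
  induction l₁ generalizing l₂ with
  | nil => simp
  | cons a l₁ ih =>
    rw [List.cons_append, cycleWeight_cons_eq_concat, List.append_assoc, ih,
      List.append_assoc, List.singleton_append]

theorem cycleWeight_nonneg (l : List M) : 0 ≤ cycleWeight l :=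
  List.sum_nonneg (by simp only [List.mem_map]; rintro _ ⟨e, -, rfl⟩; exact dist_nonneg)

theorem cycleWeight_cons_append_cons_le (x y : M) (r b : List M) :
    cycleWeight ((x :: r) ++ (y :: b))
      ≤ cycleWeight (x :: r) + cycleWeight (y :: b) + 2 * dist x y := by
  have hlast : (r ++ y :: b).getLastD x = b.getLastD y := by
    simp [List.getLastD_eq_getLast?, List.getLast?_cons]
  rw [List.cons_append, cycleWeight_cons, hlast, ← List.cons_append,
    pathWeight_cons_append_cons, cycleWeight_cons, cycleWeight_cons]
  linarith [dist_triangle (r.getLastD x) x y, dist_triangle (b.getLastD y) y x, dist_comm x y]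

theorem length_filter_mul_le_sum_dist (L : List (M × M)) (P : M × M → Bool) {d : ℝ}
    (hd : ∀ e ∈ L, P e → d ≤ dist e.1 e.2) :
    ((L.filter P).length : ℝ) * d ≤ (L.map fun e => dist e.1 e.2).sum := by
  calc ((L.filter P).length : ℝ) * d
      = ((L.filter P).map fun e => dist e.1 e.2).length • d := by simp
    _ ≤ ((L.filter P).map fun e => dist e.1 e.2).sum :=
        List.card_nsmul_le_sum _ _ (by
          simp only [List.mem_map, List.mem_filter]
          rintro _ ⟨e, ⟨he, hP⟩, rfl⟩
          exact hd e he hP)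
    _ ≤ (L.map fun e => dist e.1 e.2).sum :=
        (List.filter_sublist.map _).sum_le_sum (by
          simp only [List.mem_map]
          rintro _ ⟨e, -, rfl⟩
          exact dist_nonneg)

end Tours

section SetDist

variable {M : Type*} [MetricSpace M] {X Y : Finset M}

theorem setDist_le_dist {x y : M} (hx : x ∈ X) (hy : y ∈ Y) : setDist X Y ≤ dist x y :=
  csInf_le ⟨0, by rintro c ⟨x', -, y', -, rfl⟩; exact dist_nonneg⟩ ⟨x, hx, y, hy, rfl⟩

theorem exists_dist_eq_setDist (hX : X.Nonempty) (hY : Y.Nonempty) :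
    ∃ x ∈ X, ∃ y ∈ Y, dist x y = setDist X Y := by
  have hfin : {c | ∃ x ∈ X, ∃ y ∈ Y, c = dist x y}.Finite := by
    refine ((X ×ˢ Y).finite_toSet.image fun p => dist p.1 p.2).subset ?_
    rintro c ⟨x, hx, y, hy, rfl⟩
    exact ⟨(x, y), by simp [hx, hy], rfl⟩
  obtain ⟨x, hx, y, hy, h⟩ :=
    Set.Nonempty.csInf_mem
      (by exact ⟨_, hX.choose, hX.choose_spec, hY.choose, hY.choose_spec, rfl⟩) hfin
  exact ⟨x, hx, y, hy, h.symm⟩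

/-- Since `sInf ∅ = 0`, a positive distance forces both sets to be nonempty. -/
theorem nonempty_of_setDist_pos (h : 0 < setDist X Y) : X.Nonempty ∧ Y.Nonempty := by
  constructor <;> by_contra hne <;>
    simp [setDist, Finset.not_nonempty_iff_eq_empty.mp hne] at h

theorem disjoint_of_setDist_pos (h : 0 < setDist X Y) : Disjoint X Y :=
  Finset.disjoint_left.mpr fun {a} haX haY => by
    linarith [setDist_le_dist haX haY, dist_self a]

end SetDist

section OptimalTours

variable {M : Type*} [MetricSpace M] [DecidableEq M]

theorem tspCost_le_cycleWeight {X : Finset M} {l : List M} (hnd : l.Nodup)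
    (hl : l.toFinset = X) : tspCost X ≤ cycleWeight l :=
  csInf_le ⟨0, by rintro c ⟨l', -, -, rfl⟩; exact cycleWeight_nonneg l'⟩ ⟨l, hnd, hl, rfl⟩

/-- Tours of `X` are permutations of `X.toList`, so the infimum is over a finite set. -/
theorem exists_cycleWeight_eq_tspCost (X : Finset M) :
    ∃ l : List M, l.Nodup ∧ l.toFinset = X ∧ cycleWeight l = tspCost X := by
  have hfin : {c | ∃ l : List M, l.Nodup ∧ l.toFinset = X ∧ c = cycleWeight l}.Finite := by
    refine (X.toList.permutations.finite_toSet.image cycleWeight).subset ?_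
    rintro c ⟨l, hnd, hX, rfl⟩
    refine ⟨l, List.mem_permutations.mpr ?_, rfl⟩
    exact List.perm_of_nodup_nodup_toFinset_eq hnd X.nodup_toList (by simp [hX])
  obtain ⟨l, hnd, hl, hc⟩ :=
    Set.Nonempty.csInf_mem (by exact ⟨_, X.toList, X.nodup_toList, X.toList_toFinset, rfl⟩) hfin
  exact ⟨l, hnd, hl, hc.symm⟩

theorem exists_cons_cycleWeight_eq_tspCost {X : Finset M} {x : M} (hx : x ∈ X) :
    ∃ t : List M, (x :: t).Nodup ∧ (x :: t).toFinset = X ∧ cycleWeight (x :: t) = tspCost X := by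
  obtain ⟨l, hnd, hl, hw⟩ := exists_cycleWeight_eq_tspCost X
  obtain ⟨p, s, rfl⟩ := List.append_of_mem (List.mem_toFinset.mp (hl ▸ hx))
  have hperm : (p ++ x :: s).Perm (x :: (s ++ p)) := List.perm_append_comm
  refine ⟨s ++ p, hperm.nodup_iff.mp hnd, ?_, ?_⟩
  · rw [← List.toFinset_eq_of_perm _ _ hperm, hl]
  · rw [← hw, ← List.cons_append, cycleWeight_append_comm]

theorem tspCost_union_le {X Y : Finset M} (hXY : Disjoint X Y) {x y : M} (hx : x ∈ X)
    (hy : y ∈ Y) : tspCost (X ∪ Y) ≤ tspCost X + tspCost Y + 2 * dist x y := by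
  obtain ⟨r, hrnd, hr, hrw⟩ := exists_cons_cycleWeight_eq_tspCost hx
  obtain ⟨b, hbnd, hb, hbw⟩ := exists_cons_cycleWeight_eq_tspCost hy
  have hnd : ((x :: r) ++ (y :: b)).Nodup := by
    refine List.nodup_append.mpr ⟨hrnd, hbnd, fun u hu v hv huv => ?_⟩
    subst huv
    exact Finset.disjoint_left.mp hXY (hr ▸ List.mem_toFinset.mpr hu)
      (hb ▸ List.mem_toFinset.mpr hv)
  calc tspCost (X ∪ Y) ≤ cycleWeight ((x :: r) ++ (y :: b)) :=
        tspCost_le_cycleWeight hnd (by rw [List.toFinset_append, hr, hb])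
    _ ≤ _ := hrw ▸ hbw ▸ cycleWeight_cons_append_cons_le x y r b

theorem crossing_length_mul_setDist_le_cycleWeight (l : List M) (R B : Finset M) :
    (((l.zip (l.rotate 1)).filter
        (fun e => decide ((e.1 ∈ R ∧ e.2 ∈ B) ∨ (e.1 ∈ B ∧ e.2 ∈ R)))).length : ℝ)
      * setDist R B ≤ cycleWeight l := by
  refine length_filter_mul_le_sum_dist _ _ fun e _ he => ?_
  rcases of_decide_eq_true he with ⟨h1, h2⟩ | ⟨h1, h2⟩
  · exact setDist_le_dist h1 h2
  · exact dist_comm e.1 e.2 ▸ setDist_le_dist h2 h1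

end OptimalTours

theorem image_univ_eq_union_of_coloring {ι M : Type*} [Fintype ι] [DecidableEq M]
    (pts : ι × Bool → M) (σ : ι → Bool) :
    Finset.image pts Finset.univ = Finset.image (fun i => pts (i, σ i)) Finset.univ
      ∪ Finset.image (fun i => pts (i, !(σ i))) Finset.univ := by
  ext a
  simp only [Finset.mem_image, Finset.mem_union, Finset.mem_univ, true_and]
  constructor
  · rintro ⟨⟨i, b⟩, rfl⟩
    cases Bool.eq_or_eq_not b (σ i) with
    | inl h => exact Or.inl ⟨i, by rw [h]⟩
    | inr h => exact Or.inr ⟨i, by rw [h]⟩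
  · rintro (⟨i, rfl⟩ | ⟨i, rfl⟩) <;> exact ⟨_, rfl⟩

theorem crossing_edges_bound_general
    (n : ℕ)
    (pts : Fin n × Bool → α)
    (S : Finset α) (hS : S = Finset.image pts Finset.univ)
    (μ β : ℝ) (hμ : 0 < μ) (hβ : 1 ≤ β)
    (σ₀ : Fin n → Bool) (R₀ B₀ : Finset α)
    (hR₀ : R₀ = Finset.image (fun i => pts (i, σ₀ i)) Finset.univ)
    (hB₀ : B₀ = Finset.image (fun i => pts (i, !(σ₀ i))) Finset.univ)
    (hdpos : 0 < setDist R₀ B₀)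
    (hsep : μ * (tspCost R₀ + tspCost B₀) ≤ setDist R₀ B₀)
    (l : List α)
    (hlen : cycleWeight l ≤ β * tspCost S) :
    (((l.zip (l.rotate 1)).filter
        (fun e => decide ((e.1 ∈ R₀ ∧ e.2 ∈ B₀) ∨ (e.1 ∈ B₀ ∧ e.2 ∈ R₀)))).length : ℝ)
      ≤ (2 + 1 / μ) * β := by
  obtain ⟨hR₀ne, hB₀ne⟩ := nonempty_of_setDist_pos hdpos
  obtain ⟨x, hx, y, hy, hxy⟩ := exists_dist_eq_setDist hR₀ne hB₀ne
  set d := setDist R₀ B₀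
  have hS_union : S = R₀ ∪ B₀ := by rw [hS, hR₀, hB₀, image_univ_eq_union_of_coloring]
  have hS_tsp : tspCost S ≤ tspCost R₀ + tspCost B₀ + 2 * d := by
    rw [hS_union, ← hxy]
    exact tspCost_union_le (disjoint_of_setDist_pos hdpos) hx hy
  have hparts : tspCost R₀ + tspCost B₀ ≤ d / μ := by
    rw [le_div_iff₀ hμ]
    linarith
  have hβ0 : 0 ≤ β := by linarith
  refine le_of_mul_le_mul_right ?_ hdpos
  calc _ ≤ cycleWeight l := crossing_length_mul_setDist_le_cycleWeight l R₀ B₀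
    _ ≤ β * tspCost S := hlen
    _ ≤ β * (d / μ + 2 * d) := by gcongr; linarith
    _ = (2 + 1 / μ) * β * d := by field_simp; ring

/-- `S` consists of `n ≥ 3` pairs `{pts (i, false), pts (i, true)}`. If
`S = R₀ ∪ B₀` is a feasible coloring with `d(R₀, B₀) > 0` and
`d(R₀, B₀) ≥ μ · (tspCost R₀ + tspCost B₀)` (with `μ > 0`), and `l` is a Hamiltonian
cycle on `S` of total length at most `β · tspCost S` (with `β ≥ 1`), then the number of
edges of `l` crossing the cut `(R₀, B₀)` is at most `(2 + 1/μ) · β`. -/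
theorem crossing_edges_bound
    (n : ℕ) (hn : 3 ≤ n)
    (pts : Fin n × Bool → α) (hinj : Function.Injective pts)
    (S : Finset α) (hS : S = Finset.image pts Finset.univ)
    (μ β : ℝ) (hμ : 0 < μ) (hβ : 1 ≤ β)
    (σ₀ : Fin n → Bool) (R₀ B₀ : Finset α)
    (hR₀ : R₀ = Finset.image (fun i => pts (i, σ₀ i)) Finset.univ)
    (hB₀ : B₀ = Finset.image (fun i => pts (i, !(σ₀ i))) Finset.univ)
    (hdpos : 0 < setDist R₀ B₀)
    (hsep : μ * (tspCost R₀ + tspCost B₀) ≤ setDist R₀ B₀)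
    (l : List α) (hnd : l.Nodup) (hl : l.toFinset = S)
    (hlen : cycleWeight l ≤ β * tspCost S) :
    (((l.zip (l.rotate 1)).filter
        (fun e => decide ((e.1 ∈ R₀ ∧ e.2 ∈ B₀) ∨ (e.1 ∈ B₀ ∧ e.2 ∈ R₀)))).length : ℝ)
      ≤ (2 + 1 / μ) * β :=
  crossing_edges_bound_general n pts S hS μ β hμ hβ σ₀ R₀ B₀ hR₀ hB₀ hdpos hsep l hlen
end
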